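/- arXiv:math/0406570 — 3 statements merged into one kernel-verified Lean document; each statement's English description precedes it below -/
import Mathlib

section
/- Let Q = {ρe^{iψ} : ρ > 0, ψ ∈ (0, π/2)} be the open first quadrant in ℂ. Suppose g is analytic on Q and continuous on its closure, and for constants C > 0, a > 0, m ≥ 0 satisfies |g(z)| ≤ C·e^{a(Re z)²}(1+|z|)^m for all z in the closure of Q, and ∫₀^∞ |g(x)|^p dx < ∞ for some p ∈ [1,∞). Then there is a constant C' such that for all ψ ∈ [0, π/2] and all σ > 0, ∫_σ^{σ+1} |g(ρe^{iψ})| dρ ≤ C' · max{e^a, (σ+1)^{1/p}} · (σ+2)^{2m}. -/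
/-!
Fix `σ > 0` and a measurable `φ` with `|φ| ≤ 1`. The average `Φ(w) = ∫_σ^{σ+1} φ(ρ) g(ρw) dρ` is
again holomorphic in the quadrant, grows at most like `exp (a (σ+1)² (Re w)²)`, and by Young's
inequality and the `L^p` bound it is `O(x^{-1/p})` on the positive axis. For
`θ = arctan ((σ+1)²/2)` the factor `exp (i a w²)` cancels that Gaussian exactly on the ray
`arg w = θ`, while `w^{1/p} (1+w)^{-1/p-m}` absorbs the powers of `|w|`; so `Φ` times these factors
is bounded on both edges of the sector `0 ≤ arg w ≤ θ`. The sector has opening `< π/2` and the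
growth is of order `2`, so Phragmén–Lindelöf (in the strip `log` of the sector) bounds it inside,
in particular at `e^{iψ}`. Choosing `φ = conj g / |g|` along the ray turns this into a bound for
`∫_σ^{σ+1} |g(ρe^{iψ})| dρ`. For `ψ ≥ θ` the trivial bound suffices, since then
`(σ+1)² cos² ψ ≤ 1`.
-/

open Complex MeasureTheory Real Set Metric Filter Topology Asymptotics
open scoped ComplexConjugate

namespace GaussianQuadrant

theorem le_rpow_one_sub_mul_rpow_add {t lam p : ℝ} (ht : 0 ≤ t) (hlam : 0 < lam) (hp : 1 ≤ p) :
    t ≤ lam ^ (1 - p) * t ^ p + lam := by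
  rcases le_or_gt t lam with h | h
  · have := mul_nonneg (rpow_nonneg hlam.le (1 - p)) (rpow_nonneg ht p)
    linarith
  · have ht0 : 0 < t := hlam.trans h
    calc t = t ^ (1 - p) * t ^ p := by rw [← rpow_add ht0, sub_add_cancel, rpow_one]
      _ ≤ lam ^ (1 - p) * t ^ p :=
        mul_le_mul_of_nonneg_right (rpow_le_rpow_of_nonpos hlam h.le (by linarith))
          (rpow_nonneg ht p)
      _ ≤ lam ^ (1 - p) * t ^ p + lam := le_add_of_nonneg_right hlam.le

theorem integral_le_rpow_one_sub_mul_integral_rpow_add {α : Type*} [MeasurableSpace α]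
    {μ : Measure α} [IsFiniteMeasure μ] {f : α → ℝ} {lam p : ℝ} (hf : 0 ≤ᵐ[μ] f)
    (hfp : Integrable (fun x => f x ^ p) μ) (hlam : 0 < lam) (hp : 1 ≤ p) :
    ∫ x, f x ∂μ ≤ lam ^ (1 - p) * ∫ x, f x ^ p ∂μ + lam * μ.real univ := by
  calc ∫ x, f x ∂μ ≤ ∫ x, (lam ^ (1 - p) * f x ^ p + lam) ∂μ :=
        integral_mono_of_nonneg hf ((hfp.const_mul _).add (integrable_const lam))
          (hf.mono fun x hx => le_rpow_one_sub_mul_rpow_add hx hlam hp)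
    _ = lam ^ (1 - p) * ∫ x, f x ^ p ∂μ + lam * μ.real univ := by
        rw [integral_add (hfp.const_mul _) (integrable_const lam), integral_const_mul,
          integral_const, smul_eq_mul, mul_comm lam]

theorem exists_mul_exp_mul_sq_bound {K A L m : ℝ} (hK : 0 ≤ K) (hA : 0 ≤ A) (hL : 0 ≤ L)
    (hm : 0 ≤ m) :
    ∃ B, ∀ r : ℝ, 0 ≤ r → K * rexp (A * r ^ 2) * (1 + L * r) ^ m ≤ B * rexp (B * r ^ 2) := by
  refine ⟨K * rexp (m * L) + A + m * L, fun r hr => ?_⟩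
  have hpoly : (1 + L * r) ^ m ≤ rexp (m * L) * rexp (m * L * r ^ 2) :=
    calc (1 + L * r) ^ m ≤ rexp (L * r) ^ m :=
          rpow_le_rpow (by positivity) (by linarith [add_one_le_exp (L * r)]) hm
      _ = rexp (m * (L * r)) := by rw [← exp_mul, mul_comm]
      _ ≤ rexp (m * L) * rexp (m * L * r ^ 2) := by
          rw [← Real.exp_add]
          exact exp_le_exp.2 (by nlinarith [sq_nonneg (r - 1), mul_nonneg hm hL])
  have hB : 0 ≤ K * rexp (m * L) := by positivity
  calc K * rexp (A * r ^ 2) * (1 + L * r) ^ m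
      ≤ K * rexp (A * r ^ 2) * (rexp (m * L) * rexp (m * L * r ^ 2)) := by gcongr
    _ = K * rexp (m * L) * rexp ((A + m * L) * r ^ 2) := by
        rw [add_mul, Real.exp_add]
        ring
    _ ≤ (K * rexp (m * L) + A + m * L) * rexp ((K * rexp (m * L) + A + m * L) * r ^ 2) := by
        gcongr
        · linarith [mul_nonneg hm hL]
        · linarith

theorem sq_mul_cos_arctan (t : ℝ) :
    t ^ 2 * Real.cos (Real.arctan (t ^ 2 / 2)) = 2 * Real.sin (Real.arctan (t ^ 2 / 2)) := by
  rw [cos_arctan, sin_arctan]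
  ring

theorem sq_mul_cos_arctan_sq_le_one (t : ℝ) :
    t ^ 2 * Real.cos (Real.arctan (t ^ 2 / 2)) ^ 2 ≤ 1 := by
  rw [sq (Real.cos _), ← mul_assoc, sq_mul_cos_arctan]
  nlinarith [Real.sin_sq_add_cos_sq (Real.arctan (t ^ 2 / 2)),
    two_mul_le_add_sq (Real.sin (Real.arctan (t ^ 2 / 2))) (Real.cos (Real.arctan (t ^ 2 / 2)))]

theorem norm_le_norm_one_add {w : ℂ} (hw : 0 ≤ w.re) : ‖w‖ ≤ ‖1 + w‖ := by
  rw [← sq_le_sq₀ (norm_nonneg _) (norm_nonneg _), Complex.sq_norm, Complex.sq_norm, normSq_apply,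
    normSq_apply]
  simp only [add_re, one_re, add_im, one_im, zero_add]
  nlinarith

theorem one_le_norm_one_add {w : ℂ} (hw : 0 ≤ w.re) : 1 ≤ ‖1 + w‖ :=
  calc (1 : ℝ) ≤ (1 + w).re := by simp [hw]
    _ ≤ ‖1 + w‖ := re_le_norm _

theorem exp_eq_ofReal_exp_re_mul_exp_im_mul_I (ζ : ℂ) :
    cexp ζ = rexp ζ.re * cexp (ζ.im * I) := by
  conv_lhs => rw [← re_add_im ζ]
  rw [Complex.exp_add, ofReal_exp]

theorem exp_mem_quadrant {ζ : ℂ} (h₀ : 0 < ζ.im) (h₁ : ζ.im < π / 2) :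
    cexp ζ ∈ Ioi 0 ×ℂ Ioi 0 := by
  have hcos : 0 < Real.cos ζ.im := cos_pos_of_mem_Ioo ⟨by linarith [pi_pos], h₁⟩
  have hsin : 0 < Real.sin ζ.im := sin_pos_of_pos_of_lt_pi h₀ (by linarith [pi_pos])
  rw [mem_reProdIm, mem_Ioi, mem_Ioi, exp_re, exp_im]
  exact ⟨by positivity, by positivity⟩

theorem exp_mem_closedQuadrant {ζ : ℂ} (h₀ : 0 ≤ ζ.im) (h₁ : ζ.im ≤ π / 2) :
    cexp ζ ∈ Ici 0 ×ℂ Ici 0 := by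
  have hcos : 0 ≤ Real.cos ζ.im := cos_nonneg_of_mem_Icc ⟨by linarith [pi_pos], h₁⟩
  have hsin : 0 ≤ Real.sin ζ.im := sin_nonneg_of_nonneg_of_le_pi h₀ (by linarith [pi_pos])
  rw [mem_reProdIm, mem_Ici, mem_Ici, exp_re, exp_im]
  exact ⟨by positivity, by positivity⟩

theorem ofReal_mul_mem_quadrant {ρ : ℝ} (hρ : 0 < ρ) {w : ℂ} (hw : w ∈ Ioi 0 ×ℂ Ioi 0) :
    (ρ : ℂ) * w ∈ Ioi 0 ×ℂ Ioi 0 := by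
  simp only [mem_reProdIm, mem_Ioi, re_ofReal_mul, im_ofReal_mul] at hw ⊢
  exact ⟨mul_pos hρ hw.1, mul_pos hρ hw.2⟩

theorem ofReal_mul_mem_closedQuadrant {ρ : ℝ} (hρ : 0 ≤ ρ) {w : ℂ} (hw : w ∈ Ici 0 ×ℂ Ici 0) :
    (ρ : ℂ) * w ∈ Ici 0 ×ℂ Ici 0 := by
  simp only [mem_reProdIm, mem_Ici, re_ofReal_mul, im_ofReal_mul] at hw ⊢
  exact ⟨mul_nonneg hρ hw.1, mul_nonneg hρ hw.2⟩

theorem norm_comp_exp_le_of_sector {F : ℂ → ℂ} {θ B M : ℝ} (hθ₀ : 0 < θ) (hθ : θ < π / 2)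
    (hd : DifferentiableOn ℂ F (Ioi 0 ×ℂ Ioi 0)) (hc : ContinuousOn F (Ici 0 ×ℂ Ici 0))
    (hgrowth : ∀ w ∈ Ici 0 ×ℂ Ici 0, ‖F w‖ ≤ B * rexp (B * ‖w‖ ^ 2))
    (hreal : ∀ x : ℝ, 0 < x → ‖F x‖ ≤ M)
    (hray : ∀ x : ℝ, 0 < x → ‖F (x * cexp (θ * I))‖ ≤ M)
    {ζ : ℂ} (h₀ : 0 ≤ ζ.im) (h₁ : ζ.im ≤ θ) : ‖F (cexp ζ)‖ ≤ M := by
  have hB : 0 ≤ B :=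
    (norm_nonneg _).trans <| (hgrowth 0 (by simp [mem_reProdIm])).trans (by simp)
  refine PhragmenLindelof.horizontal_strip (f := F ∘ cexp) ⟨?_, ?_⟩ ⟨2, ?_, B, ?_⟩
    (fun ζ hζ => ?_) (fun ζ hζ => ?_) h₀ h₁
  · intro ζ hζ
    have hmem := exp_mem_quadrant hζ.1 (hζ.2.trans hθ)
    exact ((hd.differentiableAt ((isOpen_Ioi.reProdIm isOpen_Ioi).mem_nhds hmem)).comp ζ
      differentiableAt_exp).differentiableWithinAt
  · rw [closure_preimage_im, closure_Ioo hθ₀.ne]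
    exact hc.comp Complex.continuous_exp.continuousOn
      fun ζ hζ => exp_mem_closedQuadrant hζ.1 (hζ.2.trans hθ.le)
  · rw [sub_zero, lt_div_iff₀ hθ₀]
    linarith
  · refine IsBigO.of_bound B ?_
    rw [eventually_inf_principal]
    filter_upwards with ζ hζ
    have hgr := hgrowth _ (exp_mem_closedQuadrant hζ.1.le (hζ.2.trans hθ).le)
    rw [norm_exp, ← Real.exp_nat_mul, Nat.cast_ofNat] at hgr
    rw [Function.comp_apply, norm_of_nonneg (exp_pos _).le]
    refine hgr.trans (mul_le_mul_of_nonneg_left (exp_le_exp.2 ?_) hB)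
    exact mul_le_mul_of_nonneg_left (exp_le_exp.2 (by linarith [le_abs_self ζ.re])) hB
  · rw [Function.comp_apply, exp_eq_ofReal_exp_re_mul_exp_im_mul_I, hζ, ofReal_zero, zero_mul,
      Complex.exp_zero, mul_one]
    exact hreal _ (exp_pos _)
  · rw [Function.comp_apply, exp_eq_ofReal_exp_re_mul_exp_im_mul_I, hζ]
    exact hray _ (exp_pos _)

noncomputable def quadrantWeight (a q m : ℝ) (w : ℂ) : ℂ :=
  cexp (I * a * w ^ 2) * w ^ (q : ℂ) * (1 + w) ^ ((-(q + m) : ℝ) : ℂ)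

section Weight

variable {a q m : ℝ}

theorem norm_quadrantWeight (w : ℂ) :
    ‖quadrantWeight a q m w‖ =
      rexp (-(2 * a * w.re * w.im)) * ‖w‖ ^ q * ‖1 + w‖ ^ (-(q + m)) := by
  simp only [quadrantWeight, norm_mul, norm_exp, norm_cpow_real]
  congr 3
  simp [sq]
  ring

theorem differentiableOn_quadrantWeight :
    DifferentiableOn ℂ (quadrantWeight a q m) {w | 0 < w.re} := by
  intro w hw
  have hslit : ∀ z : ℂ, 0 < z.re → z ∈ slitPlane := fun z hz => mem_slitPlane_iff.2 (Or.inl hz)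
  refine DifferentiableAt.differentiableWithinAt ?_
  refine ((((differentiableAt_id.pow 2).const_mul (I * a)).cexp).mul
    (differentiableAt_id.cpow_const (hslit w hw))).mul
    ((differentiableAt_id.const_add 1).cpow_const (hslit _ ?_))
  simp only [add_re, one_re, id]
  exact add_pos one_pos hw

theorem continuousOn_quadrantWeight (hq : 0 < q) :
    ContinuousOn (quadrantWeight a q m) {w | 0 ≤ w.re} := by
  intro w hw
  refine ContinuousAt.continuousWithinAt ?_
  refine (((Complex.continuous_exp.comp (continuous_const.mul (continuous_pow 2))).continuousAt).mul
    (continuousAt_cpow_const_of_re_pos (Or.inl hw) (by simpa using hq))).mul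
    ((continuousAt_const.add continuousAt_id).cpow continuousAt_const
      (mem_slitPlane_iff.2 (Or.inl ?_)))
  simp only [Pi.add_apply, add_re, one_re, id]
  linarith [show 0 ≤ w.re from hw]

theorem norm_quadrantWeight_le (hq : 0 ≤ q) {w : ℂ} (hw : 0 ≤ w.re) :
    ‖quadrantWeight a q m w‖ ≤ rexp (-(2 * a * w.re * w.im)) * ‖1 + w‖ ^ (-m) := by
  have h1 : 0 < ‖1 + w‖ := one_pos.trans_le (one_le_norm_one_add hw)
  rw [norm_quadrantWeight, mul_assoc]
  gcongr
  calc ‖w‖ ^ q * ‖1 + w‖ ^ (-(q + m)) ≤ ‖1 + w‖ ^ q * ‖1 + w‖ ^ (-(q + m)) := by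
        gcongr
        exact norm_le_norm_one_add hw
    _ = ‖1 + w‖ ^ (-m) := by rw [← rpow_add h1]; ring_nf

theorem norm_quadrantWeight_le_one (ha : 0 ≤ a) (hq : 0 ≤ q) (hm : 0 ≤ m) {w : ℂ}
    (hw : 0 ≤ w.re) (hw' : 0 ≤ w.im) : ‖quadrantWeight a q m w‖ ≤ 1 := by
  refine (norm_quadrantWeight_le hq hw).trans (mul_le_one₀ ?_ (by positivity) ?_)
  · exact exp_le_one_iff.2 (by have := mul_nonneg (mul_nonneg ha hw) hw'; linarith)
  · exact rpow_le_one_of_one_le_of_nonpos (one_le_norm_one_add hw) (by linarith)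

theorem norm_quadrantWeight_ofReal_le (hqm : 0 ≤ q + m) {x : ℝ} (hx : 0 ≤ x) :
    ‖quadrantWeight a q m x‖ ≤ x ^ q := by
  have h1 : 1 ≤ ‖1 + (x : ℂ)‖ := one_le_norm_one_add (by simpa using hx)
  rw [norm_quadrantWeight, ofReal_im, mul_zero, neg_zero, Real.exp_zero, one_mul, norm_real,
    norm_of_nonneg hx]
  exact mul_le_of_le_one_right (by positivity) (rpow_le_one_of_one_le_of_nonpos h1 (by linarith))

theorem exp_neg_mul_rpow_le_norm_quadrantWeight (ha : 0 ≤ a) (hqm : 0 ≤ q + m) {w : ℂ}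
    (hw : ‖w‖ = 1) (hre : 0 ≤ w.re) :
    rexp (-a) * 2 ^ (-(q + m)) ≤ ‖quadrantWeight a q m w‖ := by
  have h1 : 1 ≤ ‖1 + w‖ := one_le_norm_one_add hre
  have h2 : ‖1 + w‖ ≤ 2 := (norm_add_le _ _).trans (by rw [norm_one, hw]; norm_num)
  have hunit : w.re ^ 2 + w.im ^ 2 = 1 := by
    rw [← one_pow 2, ← hw, Complex.sq_norm, normSq_apply]
    ring
  rw [norm_quadrantWeight, hw, one_rpow, mul_one]
  refine mul_le_mul (exp_le_exp.2 ?_) (rpow_le_rpow_of_nonpos (by linarith) h2 (by linarith))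
    (by positivity) (by positivity)
  nlinarith [two_mul_le_add_sq w.re w.im]

theorem exp_mul_rpow_mul_norm_quadrantWeight_le {A t : ℝ} (hq : 0 ≤ q) (hm : 0 ≤ m) (ht : 1 ≤ t)
    {w : ℂ} (hw : 0 ≤ w.re) (hA : A * w.re ^ 2 ≤ 2 * a * w.re * w.im) :
    rexp (A * w.re ^ 2) * (1 + t * ‖w‖) ^ m * ‖quadrantWeight a q m w‖ ≤ (2 * t) ^ m := by
  have h1 : 0 < ‖1 + w‖ := one_pos.trans_le (one_le_norm_one_add hw)
  have hpoly : 1 + t * ‖w‖ ≤ 2 * t * ‖1 + w‖ := by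
    nlinarith [norm_le_norm_one_add hw, one_le_norm_one_add hw, norm_nonneg w]
  calc rexp (A * w.re ^ 2) * (1 + t * ‖w‖) ^ m * ‖quadrantWeight a q m w‖
      ≤ rexp (A * w.re ^ 2) * (1 + t * ‖w‖) ^ m *
          (rexp (-(2 * a * w.re * w.im)) * ‖1 + w‖ ^ (-m)) := by
        gcongr
        exact norm_quadrantWeight_le hq hw
    _ = rexp (A * w.re ^ 2 - 2 * a * w.re * w.im) * ((1 + t * ‖w‖) ^ m * ‖1 + w‖ ^ (-m)) := by
        rw [sub_eq_add_neg, Real.exp_add]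
        ring
    _ ≤ 1 * ((2 * t * ‖1 + w‖) ^ m * ‖1 + w‖ ^ (-m)) := by
        gcongr
        exact exp_le_one_iff.2 (by linarith)
    _ = (2 * t) ^ m := by
        rw [one_mul, mul_rpow (by positivity) h1.le, mul_assoc, ← rpow_add h1, add_neg_cancel,
          rpow_zero, mul_one]

theorem exists_norm_mul_quadrantWeight_le {Φ : ℂ → ℂ} {K t : ℝ} (ha : 0 ≤ a) (hq : 0 ≤ q)
    (hm : 0 ≤ m) (hK : 0 ≤ K) (ht : 0 ≤ t)
    (hΦ : ∀ w ∈ Ici 0 ×ℂ Ici 0, ‖Φ w‖ ≤ K * rexp (a * t ^ 2 * w.re ^ 2) * (1 + t * ‖w‖) ^ m) :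
    ∃ B, ∀ w ∈ Ici 0 ×ℂ Ici 0, ‖Φ w * quadrantWeight a q m w‖ ≤ B * rexp (B * ‖w‖ ^ 2) := by
  obtain ⟨B, hB⟩ := exists_mul_exp_mul_sq_bound hK (mul_nonneg ha (sq_nonneg t)) ht hm
  refine ⟨B, fun w hw => ?_⟩
  have hre : w.re ^ 2 ≤ ‖w‖ ^ 2 := by
    rw [← sq_abs]
    exact pow_le_pow_left₀ (abs_nonneg _) (abs_re_le_norm w) 2
  rw [norm_mul]
  calc ‖Φ w‖ * ‖quadrantWeight a q m w‖ ≤ ‖Φ w‖ :=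
        mul_le_of_le_one_right (norm_nonneg _) (norm_quadrantWeight_le_one ha hq hm hw.1 hw.2)
    _ ≤ K * rexp (a * t ^ 2 * ‖w‖ ^ 2) * (1 + t * ‖w‖) ^ m :=
        (hΦ w hw).trans (by gcongr)
    _ ≤ B * rexp (B * ‖w‖ ^ 2) := hB _ (norm_nonneg w)

theorem norm_mul_quadrantWeight_ray_le {Φ : ℂ → ℂ} {K t : ℝ} (hq : 0 ≤ q) (hm : 0 ≤ m)
    (hK : 0 ≤ K) (ht : 1 ≤ t)
    (hΦ : ∀ w ∈ Ici 0 ×ℂ Ici 0, ‖Φ w‖ ≤ K * rexp (a * t ^ 2 * w.re ^ 2) * (1 + t * ‖w‖) ^ m)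
    {x : ℝ} (hx : 0 < x) :
    ‖Φ (x * cexp (Real.arctan (t ^ 2 / 2) * I)) *
      quadrantWeight a q m (x * cexp (Real.arctan (t ^ 2 / 2) * I))‖ ≤ K * (2 * t) ^ m := by
  set θ := Real.arctan (t ^ 2 / 2)
  set w : ℂ := x * cexp (θ * I)
  have hθ₀ : 0 ≤ θ := arctan_nonneg.2 (by positivity)
  have hθ : θ < π / 2 := arctan_lt_pi_div_two _
  have hwre : w.re = x * Real.cos θ := by simp [w, exp_ofReal_mul_I_re]
  have hwim : w.im = x * Real.sin θ := by simp [w, exp_ofReal_mul_I_im]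
  have hw : w ∈ Ici 0 ×ℂ Ici 0 := by
    rw [mem_reProdIm, mem_Ici, mem_Ici, hwre, hwim]
    exact ⟨mul_nonneg hx.le (cos_nonneg_of_mem_Icc ⟨by linarith [pi_pos], hθ.le⟩),
      mul_nonneg hx.le (sin_nonneg_of_nonneg_of_le_pi hθ₀ (by linarith [pi_pos]))⟩
  -- the choice of `θ` makes the Gaussian growth of `Φ` and the decay of `exp (i a w²)` cancel
  have hcancel : a * t ^ 2 * w.re ^ 2 ≤ 2 * a * w.re * w.im := by
    rw [hwre, hwim]
    linear_combination (a * x ^ 2 * Real.cos θ) * sq_mul_cos_arctan t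
  rw [norm_mul]
  calc ‖Φ w‖ * ‖quadrantWeight a q m w‖
      ≤ K * (rexp (a * t ^ 2 * w.re ^ 2) * (1 + t * ‖w‖) ^ m * ‖quadrantWeight a q m w‖) :=
        (mul_le_mul_of_nonneg_right (hΦ w hw) (norm_nonneg _)).trans_eq (by ring)
    _ ≤ K * (2 * t) ^ m := by
        gcongr
        exact exp_mul_rpow_mul_norm_quadrantWeight_le hq hm ht hw.1 hcancel

theorem norm_mul_quadrantWeight_ofReal_le {Φ : ℂ → ℂ} {M : ℝ} (hqm : 0 ≤ q + m)
    (hΦ : ∀ x : ℝ, 0 < x → ‖Φ x‖ ≤ M * x ^ (-q)) {x : ℝ} (hx : 0 < x) :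
    ‖Φ x * quadrantWeight a q m x‖ ≤ M := by
  rw [norm_mul]
  calc ‖Φ x‖ * ‖quadrantWeight a q m x‖ ≤ M * x ^ (-q) * x ^ q :=
        mul_le_mul (hΦ x hx) (norm_quadrantWeight_ofReal_le hqm hx.le) (norm_nonneg _)
          ((norm_nonneg _).trans (hΦ x hx))
    _ = M := by rw [mul_assoc, ← rpow_add hx, neg_add_cancel, rpow_zero, mul_one]

theorem norm_le_of_norm_mul_quadrantWeight_le {Φ : ℂ → ℂ} {M : ℝ} (ha : 0 ≤ a)
    (hqm : 0 ≤ q + m) {w : ℂ} (hw : ‖w‖ = 1) (hre : 0 ≤ w.re)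
    (hΦ : ‖Φ w * quadrantWeight a q m w‖ ≤ M) : ‖Φ w‖ ≤ rexp a * 2 ^ (q + m) * M := by
  have hΦ' : ‖Φ w‖ * (rexp (-a) * 2 ^ (-(q + m))) ≤ M :=
    (mul_le_mul_of_nonneg_left (exp_neg_mul_rpow_le_norm_quadrantWeight ha hqm hw hre)
      (norm_nonneg _)).trans (by rwa [norm_mul] at hΦ)
  calc ‖Φ w‖ = ‖Φ w‖ * (rexp (-a) * 2 ^ (-(q + m))) * (rexp a * 2 ^ (q + m)) := by
        rw [mul_assoc, mul_mul_mul_comm, ← Real.exp_add, ← rpow_add two_pos]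
        simp
    _ ≤ rexp a * 2 ^ (q + m) * M := by
        rw [mul_comm _ M]
        gcongr

end Weight

noncomputable def radialIntegral (φ : ℝ → ℂ) (g : ℂ → ℂ) (s t : ℝ) (w : ℂ) : ℂ :=
  ∫ ρ in Ioc s t, φ ρ * g (ρ * w)

variable {g : ℂ → ℂ} {φ : ℝ → ℂ} {S : Set ℂ} {s t : ℝ}

theorem continuousOn_comp_ofReal_mul (hS : ∀ ρ : ℝ, 0 < ρ → ∀ w ∈ S, (ρ : ℂ) * w ∈ S)
    (hg : ContinuousOn g S) (hs : 0 < s) {w : ℂ} (hw : w ∈ S) :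
    ContinuousOn (fun ρ : ℝ => g (ρ * w)) (Icc s t) :=
  hg.comp (continuous_ofReal.mul continuous_const).continuousOn
    fun ρ hρ => hS ρ (hs.trans_le hρ.1) w hw

theorem integrableOn_comp_ofReal_mul (hS : ∀ ρ : ℝ, 0 < ρ → ∀ w ∈ S, (ρ : ℂ) * w ∈ S)
    (hg : ContinuousOn g S) (hs : 0 < s) {w : ℂ} (hw : w ∈ S) :
    IntegrableOn (fun ρ : ℝ => g (ρ * w)) (Ioc s t) :=
  (continuousOn_comp_ofReal_mul hS hg hs hw).integrableOn_Icc.mono_set Ioc_subset_Icc_self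

theorem exists_bound_comp_ofReal_mul {E : Type*} [NormedAddCommGroup E] {h : ℂ → E}
    (hS : ∀ ρ : ℝ, 0 < ρ → ∀ w ∈ S, (ρ : ℂ) * w ∈ S) (hh : ContinuousOn h S) (hs : 0 < s)
    {T : Set ℂ} (hT : IsCompact T) (hTS : T ⊆ S) :
    ∃ B, ∀ ρ ∈ Icc s t, ∀ w ∈ T, ‖h (ρ * w)‖ ≤ B := by
  have hK : IsCompact ((fun q : ℝ × ℂ => (q.1 : ℂ) * q.2) '' Icc s t ×ˢ T) :=
    (isCompact_Icc.prod hT).image ((continuous_ofReal.comp continuous_fst).mul continuous_snd)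
  obtain ⟨B, hB⟩ := hK.exists_bound_of_continuousOn <| hh.mono <| by
    rintro _ ⟨⟨ρ, w⟩, ⟨hρ, hw⟩, rfl⟩
    exact hS ρ (hs.trans_le hρ.1) w (hTS hw)
  exact ⟨B, fun ρ hρ w hw => hB _ ⟨(ρ, w), ⟨hρ, hw⟩, rfl⟩⟩

theorem continuousOn_radialIntegral (hSc : IsClosed S)
    (hS : ∀ ρ : ℝ, 0 < ρ → ∀ w ∈ S, (ρ : ℂ) * w ∈ S) (hg : ContinuousOn g S) (hs : 0 < s)
    (hφm : AEStronglyMeasurable φ (volume.restrict (Ioc s t))) (hφ : ∀ ρ, ‖φ ρ‖ ≤ 1) :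
    ContinuousOn (radialIntegral φ g s t) S := by
  intro w₀ hw₀
  obtain ⟨B, hB⟩ := exists_bound_comp_ofReal_mul (t := t) hS hg hs
    ((isCompact_closedBall w₀ 1).inter_left hSc) inter_subset_left
  have hnhds : S ∩ closedBall w₀ 1 ∈ 𝓝[S] w₀ :=
    inter_mem self_mem_nhdsWithin (mem_nhdsWithin_of_mem_nhds (closedBall_mem_nhds w₀ one_pos))
  refine continuousWithinAt_of_dominated (bound := fun _ => B) ?_ ?_
    (integrableOn_const measure_Ioc_lt_top.ne) ?_
  · filter_upwards [self_mem_nhdsWithin] with w hw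
    exact hφm.mul (integrableOn_comp_ofReal_mul hS hg hs hw).aestronglyMeasurable
  · filter_upwards [hnhds] with w hw
    filter_upwards [ae_restrict_mem measurableSet_Ioc] with ρ hρ
    rw [norm_mul]
    exact (mul_le_of_le_one_left (norm_nonneg _) (hφ ρ)).trans
      (hB ρ (Ioc_subset_Icc_self hρ) w hw)
  · filter_upwards [ae_restrict_mem measurableSet_Ioc] with ρ hρ
    have hρ₀ : 0 < ρ := hs.trans hρ.1
    exact continuousWithinAt_const.mul <| (hg _ (hS ρ hρ₀ w₀ hw₀)).comp
      (continuous_const.mul continuous_id).continuousWithinAt fun w hw => hS ρ hρ₀ w hw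

theorem differentiableOn_radialIntegral (hSo : IsOpen S)
    (hS : ∀ ρ : ℝ, 0 < ρ → ∀ w ∈ S, (ρ : ℂ) * w ∈ S) (hg : DifferentiableOn ℂ g S) (hs : 0 < s)
    (hφm : AEStronglyMeasurable φ (volume.restrict (Ioc s t))) (hφ : ∀ ρ, ‖φ ρ‖ ≤ 1) :
    DifferentiableOn ℂ (radialIntegral φ g s t) S := by
  intro w₀ hw₀
  obtain ⟨ε, hε, hball⟩ := Metric.isOpen_iff.1 hSo w₀ hw₀
  have hclosedBall : closedBall w₀ (ε / 2) ⊆ S :=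
    (closedBall_subset_ball (half_lt_self hε)).trans hball
  have hg' : ContinuousOn (deriv g) S := (hg.analyticOnNhd hSo).deriv.continuousOn
  have hgw₀ := integrableOn_comp_ofReal_mul (t := t) hS hg.continuousOn hs hw₀
  obtain ⟨B, hB⟩ := exists_bound_comp_ofReal_mul (t := t) hS hg' hs (isCompact_closedBall w₀ _)
    hclosedBall
  have hderiv := hasDerivAt_integral_of_dominated_loc_of_deriv_le
    (F := fun w ρ => φ ρ * g (ρ * w)) (F' := fun w ρ => φ ρ * (deriv g (ρ * w) * ρ))
    (μ := volume.restrict (Ioc s t)) (bound := fun _ => B * t)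
    (ball_mem_nhds w₀ (half_pos hε)) ?_ ?_ ?_ ?_ (integrableOn_const measure_Ioc_lt_top.ne) ?_
  · exact hderiv.2.differentiableAt.differentiableWithinAt
  · filter_upwards [hSo.mem_nhds hw₀] with w hw
    exact hφm.mul (integrableOn_comp_ofReal_mul hS hg.continuousOn hs hw).aestronglyMeasurable
  · refine hgw₀.norm.mono' (hφm.mul hgw₀.aestronglyMeasurable) (Eventually.of_forall fun ρ => ?_)
    rw [norm_mul]
    exact mul_le_of_le_one_left (norm_nonneg _) (hφ ρ)
  · refine hφm.mul (ContinuousOn.aestronglyMeasurable ?_ measurableSet_Ioc)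
    exact ((continuousOn_comp_ofReal_mul hS hg' hs hw₀).mono Ioc_subset_Icc_self).mul
      continuous_ofReal.continuousOn
  · filter_upwards [ae_restrict_mem measurableSet_Ioc] with ρ hρ w hw
    have hρ₀ : 0 < ρ := hs.trans hρ.1
    have hBρ := hB ρ (Ioc_subset_Icc_self hρ) w (ball_subset_closedBall hw)
    rw [norm_mul, norm_mul, norm_real, norm_of_nonneg hρ₀.le]
    exact (mul_le_of_le_one_left (by positivity) (hφ ρ)).trans
      (mul_le_mul hBρ hρ.2 hρ₀.le ((norm_nonneg _).trans hBρ))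
  · filter_upwards [ae_restrict_mem measurableSet_Ioc] with ρ hρ w hw
    have hmem : (ρ : ℂ) * w ∈ S :=
      hS ρ (hs.trans hρ.1) w (hclosedBall (ball_subset_closedBall hw))
    have hlin : HasDerivAt (fun w : ℂ => (ρ : ℂ) * w) ρ w := by
      simpa using (hasDerivAt_id w).const_mul (ρ : ℂ)
    exact ((hg.differentiableAt (hSo.mem_nhds hmem)).hasDerivAt.comp w hlin).const_mul (φ ρ)

theorem norm_radialIntegral_le (hφ : ∀ ρ, ‖φ ρ‖ ≤ 1) {w : ℂ}
    (hgw : IntegrableOn (fun ρ : ℝ => g (ρ * w)) (Ioc s t)) :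
    ‖radialIntegral φ g s t w‖ ≤ ∫ ρ in Ioc s t, ‖g (ρ * w)‖ :=
  (norm_integral_le_integral_norm _).trans <| integral_mono_of_nonneg
    (Eventually.of_forall fun _ => norm_nonneg _) hgw.norm <| Eventually.of_forall fun ρ => by
      simp only [norm_mul]
      exact mul_le_of_le_one_left (norm_nonneg _) (hφ ρ)

theorem exists_radialIntegral_eq_integral_norm {w : ℂ}
    (hg : AEStronglyMeasurable (fun ρ : ℝ => g (ρ * w)) (volume.restrict (Ioc s t))) :
    ∃ φ : ℝ → ℂ, AEStronglyMeasurable φ (volume.restrict (Ioc s t)) ∧ (∀ ρ, ‖φ ρ‖ ≤ 1) ∧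
      ‖radialIntegral φ g s t w‖ = ∫ ρ in Ioc s t, ‖g (ρ * w)‖ := by
  have hconj : ∀ z : ℂ, conj z / ‖z‖ * z = (‖z‖ : ℂ) := fun z => by
    rcases eq_or_ne z 0 with rfl | hz
    · simp
    · rw [div_mul_eq_mul_div, mul_comm, mul_conj, normSq_eq_norm_sq, ofReal_pow, sq,
        mul_div_cancel_right₀ _ (ofReal_ne_zero.2 (norm_ne_zero_iff.2 hz))]
  refine ⟨fun ρ => conj (g (ρ * w)) / ‖g (ρ * w)‖, ?_, fun ρ => ?_, ?_⟩
  · exact ((continuous_conj.comp_aestronglyMeasurable hg).aemeasurable.div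
      (continuous_ofReal.comp_aestronglyMeasurable hg.norm).aemeasurable).aestronglyMeasurable
  · rw [norm_div, norm_conj, norm_real, norm_norm]
    exact div_self_le_one _
  · simp only [radialIntegral, hconj]
    rw [integral_complex_ofReal, norm_real]
    exact norm_of_nonneg (integral_nonneg fun _ => norm_nonneg _)

theorem integral_norm_comp_ofReal_mul_le {C a m : ℝ} (hC : 0 ≤ C) (ha : 0 ≤ a) (hm : 0 ≤ m)
    (hbound : ∀ z : ℂ, 0 ≤ z.re → 0 ≤ z.im → ‖g z‖ ≤ C * rexp (a * z.re ^ 2) * (1 + ‖z‖) ^ m)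
    (hs : 0 ≤ s) (hst : s ≤ t) {w : ℂ} (hw : 0 ≤ w.re) (hw' : 0 ≤ w.im) :
    ∫ ρ in Ioc s t, ‖g (ρ * w)‖ ≤
      (t - s) * C * rexp (a * t ^ 2 * w.re ^ 2) * (1 + t * ‖w‖) ^ m := by
  have hpt : ∀ ρ ∈ Ioc s t,
      ‖g (ρ * w)‖ ≤ C * rexp (a * t ^ 2 * w.re ^ 2) * (1 + t * ‖w‖) ^ m := by
    rintro ρ ⟨hsρ, hρt⟩
    have hρ : 0 ≤ ρ := hs.trans hsρ.le
    refine (hbound _ (by simp [mul_nonneg hρ hw]) (by simp [mul_nonneg hρ hw'])).trans ?_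
    rw [re_ofReal_mul, norm_mul, norm_real, norm_of_nonneg hρ]
    have hexp : a * (ρ * w.re) ^ 2 ≤ a * t ^ 2 * w.re ^ 2 := by
      rw [mul_pow, ← mul_assoc]
      gcongr
    have hpoly : 1 + ρ * ‖w‖ ≤ 1 + t * ‖w‖ := by gcongr
    exact mul_le_mul (mul_le_mul_of_nonneg_left (exp_le_exp.2 hexp) hC)
      (rpow_le_rpow (by positivity) hpoly hm) (by positivity) (by positivity)
  calc ∫ ρ in Ioc s t, ‖g (ρ * w)‖
      ≤ ∫ _ in Ioc s t, C * rexp (a * t ^ 2 * w.re ^ 2) * (1 + t * ‖w‖) ^ m :=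
        integral_mono_of_nonneg (Eventually.of_forall fun _ => norm_nonneg _)
          (integrableOn_const measure_Ioc_lt_top.ne)
          ((ae_restrict_mem measurableSet_Ioc).mono hpt)
    _ = _ := by rw [setIntegral_const, volume_real_Ioc_of_le hst, smul_eq_mul]; ring

theorem integral_norm_comp_ofReal_mul_ofReal_le {p : ℝ} (hp : 1 ≤ p)
    (hint : IntegrableOn (fun x : ℝ => ‖g x‖ ^ p) (Ioi 0)) (hs : 0 ≤ s) (hst : s ≤ t)
    {x : ℝ} (hx : 0 < x) :
    ∫ ρ in Ioc s t, ‖g (ρ * x)‖ ≤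
      ((∫ u in Ioi (0 : ℝ), ‖g u‖ ^ p) + (t - s)) * x ^ (-(1 / p)) := by
  have hsub : Ioc s t ⊆ Ioi 0 := fun ρ hρ => hs.trans_lt hρ.1
  have hint' : IntegrableOn (fun ρ : ℝ => ‖g ↑(ρ * x)‖ ^ p) (Ioi 0) :=
    (integrableOn_Ioi_comp_mul_right_iff (fun u : ℝ => ‖g u‖ ^ p) 0 hx).2 (by simpa using hint)
  have hscale : ∫ ρ in Ioc s t, ‖g ↑(ρ * x)‖ ^ p ≤ x⁻¹ * ∫ u in Ioi (0 : ℝ), ‖g u‖ ^ p := by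
    calc ∫ ρ in Ioc s t, ‖g ↑(ρ * x)‖ ^ p ≤ ∫ ρ in Ioi 0, ‖g ↑(ρ * x)‖ ^ p :=
          setIntegral_mono_set hint' (Eventually.of_forall fun _ => by positivity)
            hsub.eventuallyLE
      _ = x⁻¹ * ∫ u in Ioi (0 : ℝ), ‖g u‖ ^ p := by
          rw [integral_comp_mul_right_Ioi (fun u : ℝ => ‖g u‖ ^ p) 0 hx, zero_mul, smul_eq_mul]
  -- Young's inequality with `λ = x^{-1/p}` balances the two terms
  have hyoung := integral_le_rpow_one_sub_mul_integral_rpow_add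
    (μ := volume.restrict (Ioc s t)) (f := fun ρ : ℝ => ‖g ↑(ρ * x)‖)
    (Eventually.of_forall fun _ => norm_nonneg _) (hint'.mono_set hsub)
    (rpow_pos_of_pos hx (-(1 / p))) hp
  have hexp : (x ^ (-(1 / p))) ^ (1 - p) * x⁻¹ = x ^ (-(1 / p)) := by
    rw [← rpow_mul hx.le, ← rpow_neg_one, ← rpow_add hx]
    congr 1
    field_simp
    ring
  rw [measureReal_restrict_apply_univ, volume_real_Ioc_of_le hst] at hyoung
  simp only [ofReal_mul] at hyoung hscale ⊢
  calc ∫ ρ in Ioc s t, ‖g (ρ * x)‖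
      ≤ (x ^ (-(1 / p))) ^ (1 - p) * (x⁻¹ * ∫ u in Ioi (0 : ℝ), ‖g u‖ ^ p)
          + x ^ (-(1 / p)) * (t - s) :=
        hyoung.trans (by gcongr)
    _ = _ := by rw [← mul_assoc, hexp]; ring

theorem norm_radialIntegral_le_gaussian {C a m : ℝ} (hC : 0 ≤ C) (ha : 0 ≤ a) (hm : 0 ≤ m)
    (hcont : ContinuousOn g (Ici 0 ×ℂ Ici 0))
    (hbound : ∀ z : ℂ, 0 ≤ z.re → 0 ≤ z.im → ‖g z‖ ≤ C * rexp (a * z.re ^ 2) * (1 + ‖z‖) ^ m)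
    (hs : 0 < s) (hst : s ≤ t) (hφ : ∀ ρ, ‖φ ρ‖ ≤ 1) {w : ℂ} (hw : w ∈ Ici 0 ×ℂ Ici 0) :
    ‖radialIntegral φ g s t w‖ ≤
      (t - s) * C * rexp (a * t ^ 2 * w.re ^ 2) * (1 + t * ‖w‖) ^ m :=
  (norm_radialIntegral_le hφ (integrableOn_comp_ofReal_mul
    (fun _ hρ _ hw => ofReal_mul_mem_closedQuadrant hρ.le hw) hcont hs hw)).trans
    (integral_norm_comp_ofReal_mul_le hC ha hm hbound hs.le hst hw.1 hw.2)

theorem norm_radialIntegral_ofReal_le {p : ℝ} (hp : 1 ≤ p)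
    (hcont : ContinuousOn g (Ici 0 ×ℂ Ici 0))
    (hint : IntegrableOn (fun x : ℝ => ‖g x‖ ^ p) (Ioi 0)) (hs : 0 < s) (hst : s ≤ t)
    (hφ : ∀ ρ, ‖φ ρ‖ ≤ 1) {x : ℝ} (hx : 0 < x) :
    ‖radialIntegral φ g s t x‖ ≤
      ((∫ u in Ioi (0 : ℝ), ‖g u‖ ^ p) + (t - s)) * x ^ (-(1 / p)) :=
  (norm_radialIntegral_le hφ (integrableOn_comp_ofReal_mul
    (fun _ hρ _ hw => ofReal_mul_mem_closedQuadrant hρ.le hw) hcont hs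
    (by simp [mem_reProdIm, hx.le] : (x : ℂ) ∈ Ici 0 ×ℂ Ici 0))).trans
    (integral_norm_comp_ofReal_mul_ofReal_le hp hint hs.le hst hx)

theorem norm_radialIntegral_exp_mul_I_le_of_le_arctan {C a m p : ℝ} (hC : 0 ≤ C) (ha : 0 ≤ a)
    (hm : 0 ≤ m) (hp : 1 ≤ p) (hanal : DifferentiableOn ℂ g (Ioi 0 ×ℂ Ioi 0))
    (hcont : ContinuousOn g (Ici 0 ×ℂ Ici 0))
    (hbound : ∀ z : ℂ, 0 ≤ z.re → 0 ≤ z.im → ‖g z‖ ≤ C * rexp (a * z.re ^ 2) * (1 + ‖z‖) ^ m)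
    (hint : IntegrableOn (fun x : ℝ => ‖g x‖ ^ p) (Ioi 0)) (hs : 0 < s) (hst : s ≤ t)
    (ht : 1 ≤ t) (hφm : AEStronglyMeasurable φ (volume.restrict (Ioc s t)))
    (hφ : ∀ ρ, ‖φ ρ‖ ≤ 1) {ψ : ℝ} (hψ₀ : 0 ≤ ψ) (hψ : ψ ≤ Real.arctan (t ^ 2 / 2)) :
    ‖radialIntegral φ g s t (cexp (ψ * I))‖ ≤ rexp a * 2 ^ (1 / p + m) *
      max ((∫ x in Ioi (0 : ℝ), ‖g x‖ ^ p) + (t - s)) ((t - s) * C * (2 * t) ^ m) := by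
  set q := 1 / p
  have hq : 0 < q := by positivity
  have hθ₀ : 0 < Real.arctan (t ^ 2 / 2) := arctan_pos.2 (by positivity)
  have hθ : Real.arctan (t ^ 2 / 2) < π / 2 := arctan_lt_pi_div_two _
  have hK : 0 ≤ (t - s) * C := mul_nonneg (sub_nonneg.2 hst) hC
  have hgauss := fun w (hw : w ∈ Ici 0 ×ℂ Ici 0) =>
    norm_radialIntegral_le_gaussian hC ha hm hcont hbound hs hst hφ hw
  obtain ⟨B, hB⟩ := exists_norm_mul_quadrantWeight_le ha hq.le hm hK (by linarith) hgauss
  refine norm_le_of_norm_mul_quadrantWeight_le ha (by positivity) (norm_exp_ofReal_mul_I ψ)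
    (by
      rw [exp_ofReal_mul_I_re]
      exact cos_nonneg_of_mem_Icc ⟨by linarith [pi_pos], hψ.trans hθ.le⟩) ?_
  refine norm_comp_exp_le_of_sector hθ₀ hθ ?_ ?_ hB
    (fun x hx => (norm_mul_quadrantWeight_ofReal_le (by positivity)
      (fun x hx => norm_radialIntegral_ofReal_le hp hcont hint hs hst hφ hx) hx).trans
        (le_max_left _ _))
    (fun x hx => (norm_mul_quadrantWeight_ray_le hq.le hm hK ht hgauss hx).trans
      (le_max_right _ _))
    (by simpa using hψ₀) (by simpa using hψ)
  · exact (differentiableOn_radialIntegral (isOpen_Ioi.reProdIm isOpen_Ioi)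
      (fun _ hρ _ hw => ofReal_mul_mem_quadrant hρ hw) hanal hs hφm hφ).mul
      (differentiableOn_quadrantWeight.mono fun w hw => hw.1)
  · exact (continuousOn_radialIntegral (isClosed_Ici.reProdIm isClosed_Ici)
      (fun _ hρ _ hw => ofReal_mul_mem_closedQuadrant hρ.le hw) hcont hs hφm hφ).mul
      ((continuousOn_quadrantWeight hq).mono fun w hw => hw.1)

theorem integral_norm_exp_mul_I_le_of_arctan_le {C a m : ℝ} (hC : 0 ≤ C) (ha : 0 ≤ a)
    (hm : 0 ≤ m)
    (hbound : ∀ z : ℂ, 0 ≤ z.re → 0 ≤ z.im → ‖g z‖ ≤ C * rexp (a * z.re ^ 2) * (1 + ‖z‖) ^ m)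
    (hs : 0 ≤ s) (hst : s ≤ t) {ψ : ℝ} (hθψ : Real.arctan (t ^ 2 / 2) ≤ ψ) (hψ : ψ ≤ π / 2) :
    ∫ ρ in Ioc s t, ‖g (ρ * cexp (ψ * I))‖ ≤ (t - s) * C * rexp a * (1 + t) ^ m := by
  have hθ₀ : 0 ≤ Real.arctan (t ^ 2 / 2) := arctan_nonneg.2 (by positivity)
  have hcos : 0 ≤ Real.cos ψ := cos_nonneg_of_mem_Icc ⟨by linarith [pi_pos], hψ⟩
  have hcosθ : Real.cos ψ ^ 2 ≤ Real.cos (Real.arctan (t ^ 2 / 2)) ^ 2 :=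
    pow_le_pow_left₀ hcos (cos_le_cos_of_nonneg_of_le_pi hθ₀ (by linarith [pi_pos]) hθψ) 2
  have hexp : a * t ^ 2 * Real.cos ψ ^ 2 ≤ a := by
    nlinarith [sq_mul_cos_arctan_sq_le_one t, mul_nonneg ha (sq_nonneg t)]
  have hmem := exp_mem_closedQuadrant (ζ := ψ * I) (by simpa using hθ₀.trans hθψ)
    (by simpa using hψ)
  refine (integral_norm_comp_ofReal_mul_le hC ha hm hbound hs hst hmem.1 hmem.2).trans ?_
  rw [exp_ofReal_mul_I_re, norm_exp_ofReal_mul_I, mul_one]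
  have ht : 0 ≤ 1 + t := by linarith
  have hK : 0 ≤ (t - s) * C := mul_nonneg (sub_nonneg.2 hst) hC
  gcongr

theorem two_rpow_mul_max_le {M C m p σ : ℝ} (hM : 0 ≤ M) (hC : 0 ≤ C) (hm : 0 ≤ m)
    (hp : 1 ≤ p) (hσ : 0 ≤ σ) :
    2 ^ (1 / p + m) * max (M + 1) (C * (2 * (σ + 1)) ^ m) ≤
      2 ^ (1 + m) * (M + 1 + C * 2 ^ m) * (σ + 2) ^ m := by
  have h2 : (2 : ℝ) ^ (1 / p + m) ≤ 2 ^ (1 + m) :=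
    rpow_le_rpow_of_exponent_le one_le_two (by gcongr; exact div_le_one_of_le₀ hp (by linarith))
  have h2m : 0 ≤ C * 2 ^ m := by positivity
  have hmax : max (M + 1) (C * (2 * (σ + 1)) ^ m) ≤ (M + 1 + C * 2 ^ m) * (σ + 2) ^ m := by
    refine max_le ?_ ?_
    · exact (le_add_of_nonneg_right h2m).trans
        (le_mul_of_one_le_right (by positivity) (one_le_rpow (by linarith) hm))
    · rw [mul_rpow zero_le_two (by linarith), ← mul_assoc]
      calc C * 2 ^ m * (σ + 1) ^ m ≤ C * 2 ^ m * (σ + 2) ^ m := by gcongr; linarith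
        _ ≤ (M + 1 + C * 2 ^ m) * (σ + 2) ^ m := by gcongr; linarith
  rw [mul_assoc]
  gcongr

end GaussianQuadrant

open GaussianQuadrant in
/-- **Phragmén–Lindelöf estimate on the first quadrant** (Lemma 2.1).
If `g` is analytic on the open first quadrant `Q`, continuous on its closure,
satisfies `|g(z)| ≤ C e^{a (Re z)²} (1+|z|)^m` there and is `L^p` on the positive
real axis, then the integrals of `|g|` over segments `[σ, σ+1]` along any ray
`ρ ↦ ρ e^{iψ}`, `ψ ∈ [0, π/2]`, grow at most like `max{e^a, (σ+1)^{1/p}} (σ+2)^{2m}`. -/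
theorem stmt_0 (g : ℂ → ℂ) (C a m p : ℝ)
    (hC : 0 < C) (ha : 0 < a) (hm : 0 ≤ m) (hp : 1 ≤ p)
    (hanal : DifferentiableOn ℂ g {z : ℂ | 0 < z.re ∧ 0 < z.im})
    (hcont : ContinuousOn g {z : ℂ | 0 ≤ z.re ∧ 0 ≤ z.im})
    (hbound : ∀ z : ℂ, 0 ≤ z.re → 0 ≤ z.im →
      ‖g z‖ ≤ C * Real.exp (a * z.re ^ 2) * (1 + ‖z‖) ^ m)
    (hint : IntegrableOn (fun x : ℝ => ‖g x‖ ^ p) (Ioi (0 : ℝ))) :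
    ∃ C' : ℝ, 0 < C' ∧ ∀ ψ ∈ Icc (0 : ℝ) (π / 2), ∀ σ : ℝ, 0 < σ →
      (∫ ρ in Ioc σ (σ + 1), ‖g (ρ * Complex.exp (ψ * Complex.I))‖) ≤
        C' * max (Real.exp a) ((σ + 1) ^ (1 / p)) * (σ + 2) ^ (2 * m) := by
  set M₁ := ∫ x in Ioi (0 : ℝ), ‖g x‖ ^ p
  have hM₁ : 0 ≤ M₁ := setIntegral_nonneg measurableSet_Ioi fun _ _ => by positivity
  set K := 2 ^ (1 + m) * (M₁ + 1 + C * 2 ^ m)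
  refine ⟨K, by positivity, ?_⟩
  rintro ψ ⟨hψ₀, hψ⟩ σ hσ
  have hσ2 : 1 ≤ σ + 2 := by linarith
  suffices hray : ∫ ρ in Ioc σ (σ + 1), ‖g (ρ * cexp (ψ * I))‖ ≤ rexp a * K * (σ + 2) ^ m by
    refine hray.trans ?_
    rw [mul_comm (rexp a)]
    gcongr
    · exact le_max_left _ _
    · linarith
  rcases le_total ψ (Real.arctan ((σ + 1) ^ 2 / 2)) with hψθ | hθψ
  · have hmem := exp_mem_closedQuadrant (ζ := ψ * I) (by simpa using hψ₀) (by simpa using hψ)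
    obtain ⟨φ, hφm, hφ, heq⟩ := exists_radialIntegral_eq_integral_norm
      (integrableOn_comp_ofReal_mul (fun _ hρ _ hw => ofReal_mul_mem_closedQuadrant hρ.le hw)
        hcont hσ hmem).aestronglyMeasurable
    have hPL := norm_radialIntegral_exp_mul_I_le_of_le_arctan hC.le ha.le hm hp hanal hcont
      hbound hint hσ (by linarith) (by linarith) hφm hφ hψ₀ hψθ
    rw [add_sub_cancel_left, one_mul, mul_assoc] at hPL
    rw [← heq, mul_assoc]
    exact hPL.trans (mul_le_mul_of_nonneg_left (two_rpow_mul_max_le hM₁ hC.le hm hp hσ.le)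
      (exp_pos a).le)
  · have hCK : C ≤ K :=
      calc C ≤ C * 2 ^ m := le_mul_of_one_le_right hC.le (one_le_rpow one_le_two hm)
        _ ≤ M₁ + 1 + C * 2 ^ m := by linarith
        _ ≤ K := le_mul_of_one_le_left (by positivity) (one_le_rpow one_le_two (by linarith))
    refine (integral_norm_exp_mul_I_le_of_arctan_le hC.le ha.le hm hbound hσ.le (by linarith)
      hθψ hψ).trans ?_
    rw [add_sub_cancel_left, one_mul, show 1 + (σ + 1) = σ + 2 by ring, mul_comm C]
    gcongr
end

section
/- If an entire function g on ℂⁿ is, for each fixed value of the first n−1 variables, a polynomial in the last variable with degree uniformly bounded by M, and for each fixed value of the last variable, a polynomial in the first n−1 variables with uniformly bounded degree, then g is a polynomial in all n variables. -/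
/-!
Interpolating at `M + 1` fixed nodes `v j` in the last variable gives
`g (z̃, w) = ∑ j, g (z̃, v j) * L j (w)` with the Lagrange basis polynomials `L j`, since
`g (z̃, ·)` has degree at most `M`. Each slice `g (·, v j)` is a polynomial in `z̃`, so the right-hand
side is a polynomial in all variables.
-/

open Polynomial

theorem Polynomial.eval_eq_sum_eval_mul_eval_lagrangeBasis {K ι : Type*} [Field K] [Fintype ι]
    [DecidableEq ι] {v : ι → K} (hv : Function.Injective v) {P : K[X]}
    (hP : P.natDegree < Fintype.card ι) (w : K) :
    P.eval w = ∑ i, P.eval (v i) * (Lagrange.basis Finset.univ v i).eval w := by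
  have hdeg : P.degree < (Finset.univ : Finset ι).card :=
    degree_le_natDegree.trans_lt (by exact_mod_cast hP)
  conv_lhs => rw [Lagrange.eq_interpolate hv.injOn hdeg]
  simp only [Lagrange.interpolate_apply, eval_finsetSum, eval_mul, eval_C]

theorem MvPolynomial.eval_aeval_X {R σ : Type*} [CommSemiring R] (p : R[X]) (i : σ)
    (z : σ → R) : eval z (Polynomial.aeval (X i) p) = p.eval (z i) := by
  induction p using Polynomial.induction_on' <;> simp_all

theorem MvPolynomial.exists_eq_eval_of_polynomial_in_last_of_polynomial_in_init {K : Type*}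
    [Field K] [Infinite K] {n : ℕ} (g : (Fin (n + 1) → K) → K) (M : ℕ)
    (hlast : ∀ zt : Fin n → K, ∃ P : K[X], P.natDegree ≤ M ∧
      ∀ w, g (Fin.snoc zt w) = P.eval w)
    (hinit : ∀ w, ∃ Q : MvPolynomial (Fin n) K, ∀ zt, g (Fin.snoc zt w) = eval zt Q) :
    ∃ P : MvPolynomial (Fin (n + 1)) K, ∀ z, g z = eval z P := by
  set v : Fin (M + 1) → K := fun j => Infinite.natEmbedding K j
  have hv : Function.Injective v := (Infinite.natEmbedding K).injective.comp Fin.val_injective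
  have interpolation (zt : Fin n → K) (w : K) : g (Fin.snoc zt w) =
      ∑ j, g (Fin.snoc zt (v j)) * (Lagrange.basis Finset.univ v j).eval w := by
    obtain ⟨P, hPdeg, hP⟩ := hlast zt
    simp only [hP]
    exact eval_eq_sum_eval_mul_eval_lagrangeBasis hv (by simpa [Nat.lt_succ_iff] using hPdeg) w
  choose Q hQ using fun j => hinit (v j)
  refine ⟨∑ j, rename Fin.castSucc (Q j) *
      Polynomial.aeval (X (Fin.last n)) (Lagrange.basis Finset.univ v j), fun z => ?_⟩
  rw [← Fin.snoc_init_self z, interpolation, map_sum]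
  refine Finset.sum_congr rfl fun j _ => ?_
  rw [map_mul, eval_rename, eval_aeval_X, hQ, Fin.snoc_last]
  simp only [Fin.snoc_comp_castSucc]

theorem stmt_3_general (n : ℕ) (g : (Fin (n + 1) → ℂ) → ℂ)
    (hlast : ∃ M : ℕ, ∀ zt : Fin n → ℂ, ∃ P : Polynomial ℂ, P.natDegree ≤ M ∧
      ∀ w : ℂ, g (Fin.snoc zt w) = P.eval w)
    (hinit : ∃ M' : ℕ, ∀ w : ℂ, ∃ P : MvPolynomial (Fin n) ℂ, P.totalDegree ≤ M' ∧
      ∀ zt : Fin n → ℂ, g (Fin.snoc zt w) = MvPolynomial.eval zt P) :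
    ∃ P : MvPolynomial (Fin (n + 1)) ℂ, ∀ z : Fin (n + 1) → ℂ,
      g z = MvPolynomial.eval z P := by
  obtain ⟨M, hM⟩ := hlast
  obtain ⟨_, hM'⟩ := hinit
  exact MvPolynomial.exists_eq_eval_of_polynomial_in_last_of_polynomial_in_init g M hM
    fun w => (hM' w).imp fun _ hP => hP.2

/-- **Separate polynomiality implies joint polynomiality** for entire functions.
If an entire function `g` on `ℂ^{n+1}` is, for each fixed value of the first `n`
variables, a polynomial of degree ≤ `M` in the last variable, and for each fixed
value of the last variable a polynomial of total degree ≤ `M'` in the first `n`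
variables, then `g` is a polynomial in all `n+1` variables. -/
theorem stmt_3 (n : ℕ) (g : (Fin (n + 1) → ℂ) → ℂ)
    (hentire : Differentiable ℂ g)
    (hlast : ∃ M : ℕ, ∀ zt : Fin n → ℂ, ∃ P : Polynomial ℂ, P.natDegree ≤ M ∧
      ∀ w : ℂ, g (Fin.snoc zt w) = P.eval w)
    (hinit : ∃ M' : ℕ, ∀ w : ℂ, ∃ P : MvPolynomial (Fin n) ℂ, P.totalDegree ≤ M' ∧
      ∀ zt : Fin n → ℂ, g (Fin.snoc zt w) = MvPolynomial.eval zt P) :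
    ∃ P : MvPolynomial (Fin (n + 1)) ℂ, ∀ z : Fin (n + 1) → ℂ,
      g z = MvPolynomial.eval z P :=
  stmt_3_general n g hlast hinit
end

section
/- Under the hypotheses of the Euclidean Cowling–Price theorem with s > t (i.e., conditions (i) and (ii) with p, q ∈ [1,∞), k ∈ (n, n+p], l ∈ (n, n+q]), there exist infinitely many linearly independent measurable functions on ℝⁿ satisfying both conditions; specifically, for any t₀ with t < t₀ < s and any solid harmonic H of degree k ≥ 1, the function H·p_{t₀} satisfies (i) and (ii). -/
open Complex MeasureTheory Real Set

/-!
Put `a = 1 / (4 t₀)`, so that `H · p_{t₀}` is a polynomial times `e^{-a‖x‖²}`. Expanding the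
polynomial into monomials, both this function and its Fourier integrand factor over the
coordinates, and in one variable `∫ tᵐ e^{-at²} e^{-ity} dt` is a constant multiple of the `m`-th
derivative of the Fourier transform of the Gaussian, hence a polynomial of degree `≤ m` times
`e^{-y²/(4a)}`. Thus `g = f` and `g = f̂` both satisfy `‖g x‖ ≤ C (1 + ‖x‖)^D e^{-b‖x‖²}`, with
`b = 1 / (4 t₀)` and `b = t₀` respectively, and for such `g` the function
`‖g‖^p e^{W‖x‖²} / (1 + ‖x‖)^k` is integrable as soon as `W < p b`: this is `t₀ < s` for (i) and
`t < t₀` for (ii). The functions `x₀ʲ e^{-‖x‖²/(4t₀)}` are of the same form, and they are linearly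
independent because a polynomial vanishing on `ℝ` is zero.
-/

theorem one_add_rpow_le_exp_mul_exp {M c r : ℝ} (hM : 0 ≤ M) (hc : 0 < c) (hr : 0 ≤ r) :
    (1 + r) ^ M ≤ rexp (M ^ 2 / (4 * c)) * rexp (c * r ^ 2) := by
  have hAMGM : r * M ≤ M ^ 2 / (4 * c) + c * r ^ 2 := by
    rw [← sub_le_iff_le_add, le_div_iff₀ (by positivity)]
    nlinarith [sq_nonneg (2 * c * r - M)]
  calc (1 + r) ^ M ≤ rexp r ^ M :=
        rpow_le_rpow (by positivity) (by linarith [Real.add_one_le_exp r]) hM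
    _ = rexp (r * M) := (Real.exp_mul r M).symm
    _ ≤ rexp (M ^ 2 / (4 * c)) * rexp (c * r ^ 2) := by
        rw [← Real.exp_add]; exact Real.exp_le_exp.2 hAMGM

def HasGaussianDecay {E F : Type*} [Norm E] [Norm F] (b M : ℝ) (g : E → F) : Prop :=
  ∃ C, 0 ≤ C ∧ ∀ x, ‖g x‖ ≤ C * (1 + ‖x‖) ^ M * rexp (-b * ‖x‖ ^ 2)

namespace HasGaussianDecay

variable {E F : Type*} [SeminormedAddCommGroup E] [NormedAddCommGroup F] {b M : ℝ} {g : E → F}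

theorem of_norm_le {F' : Type*} [Norm F'] {g' : E → F'} (hg : HasGaussianDecay b M g)
    (h : ∀ x, ‖g' x‖ ≤ ‖g x‖) : HasGaussianDecay b M g' := by
  obtain ⟨C, hC, hgC⟩ := hg
  exact ⟨C, hC, fun x => (h x).trans (hgC x)⟩

theorem mono {M' : ℝ} (hg : HasGaussianDecay b M g) (hM : M ≤ M') : HasGaussianDecay b M' g := by
  obtain ⟨C, hC, hgC⟩ := hg
  refine ⟨C, hC, fun x => (hgC x).trans ?_⟩
  gcongr
  linarith [norm_nonneg x]

theorem const_mul {R : Type*} [SeminormedRing R] {g : E → R} (hg : HasGaussianDecay b M g)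
    (c : R) : HasGaussianDecay b M (fun x => c * g x) := by
  obtain ⟨C, hC, hgC⟩ := hg
  refine ⟨‖c‖ * C, by positivity, fun x => (norm_mul_le _ _).trans ?_⟩
  rw [mul_assoc, mul_assoc, ← mul_assoc C]
  gcongr
  exact hgC x

theorem sum {α : Type*} {s : Finset α} {g : α → E → F}
    (hg : ∀ i ∈ s, HasGaussianDecay b M (g i)) :
    HasGaussianDecay b M (fun x => ∑ i ∈ s, g i x) := by
  choose! C hC hgC using hg
  refine ⟨∑ i ∈ s, C i, Finset.sum_nonneg hC, fun x => ?_⟩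
  rw [Finset.sum_mul, Finset.sum_mul]
  exact (norm_sum_le _ _).trans (Finset.sum_le_sum fun i hi => hgC i hi x)

theorem integrable [MeasurableSpace E] {μ : Measure E} {c : ℝ} (hg : HasGaussianDecay b M g)
    (hgm : AEStronglyMeasurable g μ) (hcb : c < b)
    (hμ : Integrable (fun x => rexp (-c * ‖x‖ ^ 2)) μ) : Integrable g μ := by
  obtain ⟨C, hC, hgC⟩ := hg.mono (le_max_left M 0)
  refine (hμ.const_mul (C * rexp (max M 0 ^ 2 / (4 * (b - c))))).mono' hgm
    (Filter.Eventually.of_forall fun x => (hgC x).trans ?_)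
  have hpoly := one_add_rpow_le_exp_mul_exp (le_max_right M 0) (sub_pos.2 hcb) (norm_nonneg x)
  calc C * (1 + ‖x‖) ^ max M 0 * rexp (-b * ‖x‖ ^ 2)
      ≤ C * (rexp (max M 0 ^ 2 / (4 * (b - c))) * rexp ((b - c) * ‖x‖ ^ 2))
          * rexp (-b * ‖x‖ ^ 2) := by
        gcongr
    _ = C * rexp (max M 0 ^ 2 / (4 * (b - c))) * rexp (-c * ‖x‖ ^ 2) := by
        rw [mul_assoc C, mul_assoc, mul_assoc, ← Real.exp_add]; ring_nf

theorem norm_rpow_mul_exp_div (hg : HasGaussianDecay b M g) {p : ℝ} (hp : 0 ≤ p) (W k : ℝ) :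
    HasGaussianDecay (p * b - W) (p * M - k)
      (fun x => ‖g x‖ ^ p * rexp (W * ‖x‖ ^ 2) / (1 + ‖x‖) ^ k) := by
  obtain ⟨C, hC, hgC⟩ := hg
  refine ⟨C ^ p, by positivity, fun x => ?_⟩
  have h1 : 0 < 1 + ‖x‖ := by positivity
  rw [Real.norm_of_nonneg (by positivity), rpow_sub h1, mul_comm p M, rpow_mul h1.le]
  calc ‖g x‖ ^ p * rexp (W * ‖x‖ ^ 2) / (1 + ‖x‖) ^ k
      ≤ (C * (1 + ‖x‖) ^ M * rexp (-b * ‖x‖ ^ 2)) ^ p * rexp (W * ‖x‖ ^ 2) / (1 + ‖x‖) ^ k := by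
        gcongr; exact hgC x
    _ = C ^ p * (((1 + ‖x‖) ^ M) ^ p / (1 + ‖x‖) ^ k) * rexp (-(p * b - W) * ‖x‖ ^ 2) := by
        rw [mul_rpow (by positivity) (by positivity), mul_rpow hC (by positivity), ← Real.exp_mul,
          show -(p * b - W) * ‖x‖ ^ 2 = -b * ‖x‖ ^ 2 * p + W * ‖x‖ ^ 2 by ring, Real.exp_add]
        ring

end HasGaussianDecay

section InnerProductSpace

variable {V : Type*} [NormedAddCommGroup V] [InnerProductSpace ℝ V] [MeasurableSpace V]
  [BorelSpace V]

theorem continuous_integral_mul_cexp_neg_I_inner {μ : Measure V} {f : V → ℂ} (hf : Integrable f μ) :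
    Continuous (fun y => ∫ x, f x * cexp (-I * (inner ℝ x y : ℝ)) ∂μ) := by
  refine continuous_of_dominated (bound := fun x => ‖f x‖)
    (fun y => hf.aestronglyMeasurable.mul (by fun_prop : Continuous _).aestronglyMeasurable)
    (fun y => Filter.Eventually.of_forall fun x => ?_) hf.norm
    (Filter.Eventually.of_forall fun x => by fun_prop)
  rw [norm_mul, show -I * ((inner ℝ x y : ℝ) : ℂ) = ((-inner ℝ x y : ℝ) : ℂ) * I by push_cast; ring,
    norm_exp_ofReal_mul_I, mul_one]

variable [FiniteDimensional ℝ V]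

theorem integrable_exp_neg_mul_sq_norm {b : ℝ} (hb : 0 < b) :
    Integrable (fun v : V => rexp (-b * ‖v‖ ^ 2)) := by
  have := (GaussianFourier.integrable_cexp_neg_mul_sq_norm_add (V := V)
    (b := b) (by simpa using hb) 0 0).re
  simpa [← ofReal_pow, ← ofReal_neg, ← ofReal_mul, exp_ofReal_re] using this

theorem HasGaussianDecay.integrable_norm_rpow_mul_exp_div {F : Type*} [NormedAddCommGroup F]
    {g : V → F} {b M p W : ℝ} (hg : HasGaussianDecay b M g) (hgc : Continuous g) (hp : 0 ≤ p)
    (hW : W < p * b) (k : ℝ) :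
    Integrable (fun x => ‖g x‖ ^ p * rexp (W * ‖x‖ ^ 2) / (1 + ‖x‖) ^ k) := by
  have hcont : Continuous (fun x => ‖g x‖ ^ p * rexp (W * ‖x‖ ^ 2) / (1 + ‖x‖) ^ k) := by
    refine Continuous.div (by fun_prop) ?_ fun x => (rpow_pos_of_pos (by positivity) k).ne'
    exact (continuous_const.add continuous_norm).rpow_const
      fun x => Or.inl (by positivity : (0 : ℝ) < 1 + ‖x‖).ne'
  exact (hg.norm_rpow_mul_exp_div hp W k).integrable hcont.aestronglyMeasurable
    (half_lt_self (sub_pos.2 hW)) (integrable_exp_neg_mul_sq_norm (half_pos (sub_pos.2 hW)))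

end InnerProductSpace

theorem hasGaussianDecay_pow_mul_exp (a : ℝ) (m : ℕ) :
    HasGaussianDecay a m (fun t : ℝ => t ^ m * rexp (-a * t ^ 2)) := by
  refine ⟨1, zero_le_one, fun t => ?_⟩
  rw [norm_mul, norm_pow, Real.norm_eq_abs, Real.norm_of_nonneg (Real.exp_pos _).le, one_mul,
    rpow_natCast, sq_abs]
  gcongr
  linarith

theorem integrable_ofReal_pow_mul_cexp {a : ℝ} (ha : 0 < a) (m : ℕ) (η : ℝ) :
    Integrable (fun t : ℝ => (t : ℂ) ^ m * cexp (-a * t ^ 2 - I * (t * η))) := by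
  refine ((hasGaussianDecay_pow_mul_exp a m).of_norm_le fun t => le_of_eq ?_).integrable
    (by fun_prop : Continuous _).aestronglyMeasurable (half_lt_self ha)
    (by simpa only [Real.norm_eq_abs, sq_abs] using integrable_exp_neg_mul_sq (half_pos ha))
  rw [norm_mul, norm_mul, norm_pow, norm_pow, norm_real, Complex.norm_exp,
    norm_of_nonneg (Real.exp_pos _).le]
  simp [← ofReal_pow]

theorem Polynomial.exists_norm_eval_le {𝕜 : Type*} [NormedField 𝕜] (P : Polynomial 𝕜) :
    ∃ C, 0 ≤ C ∧ ∀ z, ‖P.eval z‖ ≤ C * (1 + ‖z‖) ^ P.natDegree := by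
  refine ⟨∑ i ∈ Finset.range (P.natDegree + 1), ‖P.coeff i‖,
    Finset.sum_nonneg fun _ _ => norm_nonneg _, fun z => ?_⟩
  rw [Polynomial.eval_eq_sum_range, Finset.sum_mul]
  refine (norm_sum_le _ _).trans (Finset.sum_le_sum fun i hi => ?_)
  rw [norm_mul, norm_pow]
  gcongr
  exact (pow_le_pow_left₀ (norm_nonneg z) (by linarith) i).trans
    (pow_le_pow_right₀ (by linarith [norm_nonneg z]) (Nat.lt_succ_iff.mp (Finset.mem_range.mp hi)))

theorem Polynomial.hasGaussianDecay_eval_ofReal_mul_exp (P : Polynomial ℂ) (b : ℝ) :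
    HasGaussianDecay b P.natDegree (fun y : ℝ => P.eval (y : ℂ) * (rexp (-b * y ^ 2) : ℂ)) := by
  obtain ⟨C, hC, hP⟩ := P.exists_norm_eval_le
  refine ⟨C, hC, fun y => ?_⟩
  rw [norm_mul, norm_real, Real.norm_of_nonneg (Real.exp_pos _).le, rpow_natCast,
    Real.norm_eq_abs, sq_abs]
  gcongr
  simpa using hP y

theorem exists_iteratedDeriv_const_mul_cexp_neg_mul_sq (c β : ℂ) (m : ℕ) :
    ∃ P : Polynomial ℂ, P.natDegree ≤ m ∧ ∀ u : ℝ,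
      iteratedDeriv m (fun u : ℝ => c * cexp (-β * u ^ 2)) u
        = P.eval (u : ℂ) * cexp (-β * u ^ 2) := by
  induction m with
  | zero => exact ⟨Polynomial.C c, by simp, fun u => by simp⟩
  | succ m ih =>
    obtain ⟨P, hPdeg, hP⟩ := ih
    refine ⟨Polynomial.derivative P - Polynomial.C (2 * β) * (Polynomial.X * P), ?_, fun u => ?_⟩
    · refine (Polynomial.natDegree_sub_le _ _).trans (max_le ?_ ?_)
      · exact (Polynomial.natDegree_derivative_le P).trans (by omega)
      · refine (Polynomial.natDegree_C_mul_le _ _).trans (Polynomial.natDegree_mul_le.trans ?_)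
        have := Polynomial.natDegree_X_le (R := ℂ)
        omega
    · have hderiv : HasDerivAt (fun z : ℂ => P.eval z * cexp (-β * z ^ 2))
          (P.derivative.eval (u : ℂ) * cexp (-β * (u : ℂ) ^ 2)
            + P.eval (u : ℂ) * (cexp (-β * (u : ℂ) ^ 2) * (-β * (2 * u)))) u := by
        have hsq : HasDerivAt (fun z : ℂ => -β * z ^ 2) (-β * (2 * u)) u := by
          simpa [mul_comm] using (hasDerivAt_pow 2 (u : ℂ)).const_mul (-β)
        exact (P.hasDerivAt u).mul hsq.cexp
      rw [iteratedDeriv_succ, funext hP, hderiv.comp_ofReal.deriv]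
      simp only [Polynomial.eval_sub, Polynomial.eval_mul, Polynomial.eval_C, Polynomial.eval_X]
      ring

open FourierTransform in
theorem fourier_cexp_neg_mul_sq {a : ℝ} (ha : 0 < a) :
    𝓕 (fun t : ℝ => cexp (-a * t ^ 2))
      = fun w : ℝ => 1 / ((a : ℂ) / π) ^ (1 / 2 : ℂ) * cexp (-(π ^ 2 / a) * w ^ 2) := by
  have hb : 0 < ((a : ℂ) / π).re := by
    rw [← ofReal_div, ofReal_re]; positivity
  have hG : (fun t : ℝ => cexp (-a * t ^ 2)) = fun t : ℝ => cexp (-π * (a / π) * t ^ 2) := by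
    funext t; congr 1; field_simp
  rw [hG, fourier_gaussian_pi hb]
  funext w; congr 2; field_simp

open FourierTransform Polynomial in
theorem exists_integral_ofReal_pow_mul_cexp_eq {a : ℝ} (ha : 0 < a) (m : ℕ) :
    ∃ P : Polynomial ℂ, P.natDegree ≤ m ∧ ∀ y : ℝ,
      ∫ t : ℝ, (t : ℂ) ^ m * cexp (-a * t ^ 2 - I * (t * y))
        = P.eval (y : ℂ) * (rexp (-(1 / (4 * a)) * y ^ 2) : ℂ) := by
  set G : ℝ → ℂ := fun t => cexp (-a * t ^ 2)
  have hint : ∀ k : ℕ, (k : ℕ∞) ≤ m → Integrable (fun t : ℝ => t ^ k • G t) := fun k _ => by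
    simpa [G] using integrable_ofReal_pow_mul_cexp ha k 0
  have hderiv := Real.iteratedDeriv_fourier hint le_rfl
  obtain ⟨Q, hQdeg, hQ⟩ := exists_iteratedDeriv_const_mul_cexp_neg_mul_sq
    (1 / ((a : ℂ) / π) ^ (1 / 2 : ℂ)) (π ^ 2 / a) m
  rw [fourier_cexp_neg_mul_sq ha] at hderiv
  set c : ℂ := -2 * π * I
  have hc : c ≠ 0 := by simp [c, pi_ne_zero, I_ne_zero]
  refine ⟨C (c ^ m)⁻¹ * Q.comp (C (1 / (2 * π) : ℂ) * X), ?_, fun y => ?_⟩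
  · refine (natDegree_C_mul_le _ _).trans (natDegree_comp_le.trans ?_)
    have : (C (1 / (2 * π) : ℂ) * X).natDegree ≤ 1 :=
      (natDegree_C_mul_le _ _).trans natDegree_X_le
    nlinarith
  -- `𝓕` integrates against `e^{-2πitw}`, so the frequency `y` corresponds to `w = y / (2π)`.
  have key := congrFun hderiv (y / (2 * π))
  rw [hQ, fourier_real_eq_integral_exp_smul] at key
  have hintegrand : ∀ t : ℝ, cexp (↑(-2 * π * t * (y / (2 * π))) * I) • ((c * t) ^ m • G t)
      = c ^ m * ((t : ℂ) ^ m * cexp (-a * t ^ 2 - I * (t * y))) := fun t => by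
    simp only [smul_eq_mul, G, mul_pow, sub_eq_add_neg, Complex.exp_add]
    push_cast
    field_simp
  simp only [hintegrand, integral_const_mul] at key
  have hexp : cexp (-(π ^ 2 / a) * ((y / (2 * π) : ℝ) : ℂ) ^ 2)
      = (rexp (-(1 / (4 * a)) * y ^ 2) : ℂ) := by
    push_cast; congr 1; field_simp; ring
  rw [hexp] at key
  rw [eval_mul, eval_C, eval_comp, eval_mul, eval_C, eval_X, mul_assoc,
    eq_inv_mul_iff_mul_eq₀ (pow_ne_zero m hc), ← key]
  push_cast
  rw [one_div_mul_eq_div]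

theorem hasGaussianDecay_integral_ofReal_pow_mul_cexp {a : ℝ} (ha : 0 < a) (m : ℕ) :
    HasGaussianDecay (1 / (4 * a)) m
      (fun y : ℝ => ∫ t : ℝ, (t : ℂ) ^ m * cexp (-a * t ^ 2 - I * (t * y))) := by
  obtain ⟨P, hPdeg, hP⟩ := exists_integral_ofReal_pow_mul_cexp_eq ha m
  exact ((P.hasGaussianDecay_eval_ofReal_mul_exp _).mono (by exact_mod_cast hPdeg)).of_norm_le
    fun y => (congrArg norm (hP y)).le

section EuclideanSpace

variable {ι : Type*} [Fintype ι]

theorem hasGaussianDecay_prod_apply {R : Type*} [NormedCommRing R] [NormOneClass R] {b : ℝ}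
    {M : ι → ℝ} (hM : ∀ i, 0 ≤ M i) {φ : ι → ℝ → R} (hφ : ∀ i, HasGaussianDecay b (M i) (φ i)) :
    HasGaussianDecay b (∑ i, M i) (fun y : EuclideanSpace ℝ ι => ∏ i, φ i (y i)) := by
  choose C hC hφC using hφ
  refine ⟨∏ i, C i, Finset.prod_nonneg fun i _ => hC i, fun y => ?_⟩
  have hy : 0 < 1 + ‖y‖ := by positivity
  calc ‖∏ i, φ i (y i)‖ ≤ ∏ i, ‖φ i (y i)‖ := Finset.norm_prod_le _ _
    _ ≤ ∏ i, (C i * (1 + ‖y i‖) ^ M i * rexp (-b * ‖y i‖ ^ 2)) :=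
        Finset.prod_le_prod (fun i _ => norm_nonneg _) fun i _ => hφC i (y i)
    _ = (∏ i, C i) * (∏ i, (1 + ‖y i‖) ^ M i) * rexp (-b * ‖y‖ ^ 2) := by
        rw [Finset.prod_mul_distrib, Finset.prod_mul_distrib, ← Real.exp_sum,
          EuclideanSpace.norm_sq_eq, Finset.mul_sum]
    _ ≤ (∏ i, C i) * (1 + ‖y‖) ^ (∑ i, M i) * rexp (-b * ‖y‖ ^ 2) := by
        rw [rpow_sum_of_pos hy]
        gcongr with i
        · exact Finset.prod_nonneg fun i _ => hC i
        · exact hM i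
        · exact PiLp.norm_apply_le y i

theorem MvPolynomial.sum_cast_le_totalDegree {R : Type*} [CommSemiring R] {H : MvPolynomial ι R}
    {u : ι →₀ ℕ} (hu : u ∈ H.support) : ∑ i, (u i : ℝ) ≤ H.totalDegree := by
  have := le_totalDegree hu
  rw [Finsupp.sum_fintype _ _ fun _ => rfl] at this
  exact_mod_cast this

theorem MvPolynomial.eval_mul_exp_eq_sum_prod (H : MvPolynomial ι ℝ) (a : ℝ)
    (x : EuclideanSpace ℝ ι) :
    eval (x : ι → ℝ) H * rexp (-a * ‖x‖ ^ 2)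
      = ∑ u ∈ H.support, coeff u H * ∏ i, (x i ^ u i * rexp (-a * x i ^ 2)) := by
  rw [eval_eq', Finset.sum_mul]
  refine Finset.sum_congr rfl fun u _ => ?_
  rw [Finset.prod_mul_distrib, ← Real.exp_sum, EuclideanSpace.real_norm_sq_eq, Finset.mul_sum]
  ring

theorem MvPolynomial.hasGaussianDecay_eval_mul_exp (H : MvPolynomial ι ℝ) (a : ℝ) :
    HasGaussianDecay a H.totalDegree
      (fun x : EuclideanSpace ℝ ι => eval (x : ι → ℝ) H * rexp (-a * ‖x‖ ^ 2)) := by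
  simp_rw [eval_mul_exp_eq_sum_prod]
  exact HasGaussianDecay.sum fun u hu => ((hasGaussianDecay_prod_apply (fun i => Nat.cast_nonneg _)
    fun i => hasGaussianDecay_pow_mul_exp a (u i)).mono (sum_cast_le_totalDegree hu)).const_mul _

end EuclideanSpace

section EuclideanSpace

variable {ι : Type*} [Fintype ι]

theorem cexp_neg_I_inner_eq_prod (x y : EuclideanSpace ℝ ι) :
    cexp (-I * (inner ℝ x y : ℝ)) = ∏ i, cexp (-I * (x i * y i)) := by
  rw [← Complex.exp_sum, ← Finset.mul_sum]
  simp [PiLp.inner_apply, mul_comm]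

theorem MvPolynomial.ofReal_eval_mul_exp_mul_cexp_eq_sum_prod (H : MvPolynomial ι ℝ) (a : ℝ)
    (x y : EuclideanSpace ℝ ι) :
    ((eval (x : ι → ℝ) H * rexp (-a * ‖x‖ ^ 2) : ℝ) : ℂ) * cexp (-I * (inner ℝ x y : ℝ))
      = ∑ u ∈ H.support, ((coeff u H : ℝ) : ℂ) *
          ∏ i, ((x i : ℂ) ^ u i * cexp (-a * (x i : ℂ) ^ 2 - I * (x i * y i))) := by
  rw [eval_mul_exp_eq_sum_prod, cexp_neg_I_inner_eq_prod]
  push_cast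
  rw [Finset.sum_mul]
  refine Finset.sum_congr rfl fun u _ => ?_
  rw [mul_assoc, ← Finset.prod_mul_distrib]
  congr 1
  refine Finset.prod_congr rfl fun i _ => ?_
  rw [mul_assoc, ← Complex.exp_add, sub_eq_add_neg, neg_mul I]

theorem MvPolynomial.integral_ofReal_eval_mul_exp_mul_cexp_eq {a : ℝ} (ha : 0 < a)
    (H : MvPolynomial ι ℝ) (y : EuclideanSpace ℝ ι) :
    ∫ x : EuclideanSpace ℝ ι,
        ((eval (x : ι → ℝ) H * rexp (-a * ‖x‖ ^ 2) : ℝ) : ℂ) * cexp (-I * (inner ℝ x y : ℝ))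
      = ∑ u ∈ H.support, ((coeff u H : ℝ) : ℂ) *
          ∏ i, ∫ t : ℝ, (t : ℂ) ^ u i * cexp (-a * t ^ 2 - I * (t * y i)) := by
  rw [← (PiLp.volume_preserving_toLp ι).integral_comp
    (MeasurableEquiv.toLp 2 _).measurableEmbedding]
  refine (integral_congr_ae (Filter.Eventually.of_forall fun v =>
    ofReal_eval_mul_exp_mul_cexp_eq_sum_prod H a (WithLp.toLp 2 v) y)).trans ?_
  rw [integral_finsetSum _ fun u _ => (Integrable.fintype_prod
    fun i => integrable_ofReal_pow_mul_cexp ha (u i) (y i)).const_mul _]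
  refine Finset.sum_congr rfl fun u _ => ?_
  rw [integral_const_mul, ← integral_fintype_prod_volume_eq_prod]

theorem MvPolynomial.hasGaussianDecay_integral_ofReal_eval_mul_exp_mul_cexp {a : ℝ} (ha : 0 < a)
    (H : MvPolynomial ι ℝ) :
    HasGaussianDecay (1 / (4 * a)) H.totalDegree (fun y : EuclideanSpace ℝ ι =>
      ∫ x : EuclideanSpace ℝ ι,
        ((eval (x : ι → ℝ) H * rexp (-a * ‖x‖ ^ 2) : ℝ) : ℂ) * cexp (-I * (inner ℝ x y : ℝ))) := by
  simp_rw [integral_ofReal_eval_mul_exp_mul_cexp_eq ha]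
  exact HasGaussianDecay.sum fun u hu => ((hasGaussianDecay_prod_apply (fun i => Nat.cast_nonneg _)
    fun i => hasGaussianDecay_integral_ofReal_pow_mul_cexp ha (u i)).mono
      (sum_cast_le_totalDegree hu)).const_mul _

end EuclideanSpace

theorem linearIndependent_ofReal_pow :
    LinearIndependent ℂ (fun (j : ℕ) (r : ℝ) => (r : ℂ) ^ j) := by
  let ev : Polynomial ℂ →ₗ[ℂ] (ℝ → ℂ) := LinearMap.pi fun r => Polynomial.leval (r : ℂ)
  have hker : LinearMap.ker ev = ⊥ := by
    refine LinearMap.ker_eq_bot'.2 fun P hP => Polynomial.eq_zero_of_infinite_isRoot P ?_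
    refine (Set.infinite_range_of_injective ofReal_injective).mono ?_
    rintro _ ⟨r, rfl⟩
    exact congrFun hP r
  have hev : ev ∘ Polynomial.basisMonomials ℂ = fun (j : ℕ) (r : ℝ) => (r : ℂ) ^ j := by
    funext j r
    simp [ev]
  exact hev ▸ (Polynomial.basisMonomials ℂ).linearIndependent.map' ev hker

theorem linearIndependent_ofReal_apply_pow_mul_exp {ι : Type*} [Fintype ι] (i₀ : ι) (a : ℝ) :
    LinearIndependent ℂ
      (fun (j : ℕ) (x : EuclideanSpace ℝ ι) => ((x i₀ ^ j * rexp (-a * ‖x‖ ^ 2) : ℝ) : ℂ)) := by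
  classical
  let restrict : (EuclideanSpace ℝ ι → ℂ) →ₗ[ℂ] (ℝ → ℂ) :=
    LinearMap.pi fun r => (rexp (a * r ^ 2) : ℂ) • LinearMap.proj (EuclideanSpace.single i₀ r)
  refine LinearIndependent.of_comp restrict ?_
  convert linearIndependent_ofReal_pow using 1
  funext j r
  simp only [Function.comp_apply, restrict, LinearMap.pi_apply, LinearMap.smul_apply,
    LinearMap.proj_apply, smul_eq_mul, PiLp.single_apply, PiLp.norm_single, if_pos,
    Real.norm_eq_abs, sq_abs]
  rw [← ofReal_mul, mul_left_comm, ← Real.exp_add]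
  simp

theorem cowlingPrice_conditions_of_eq_eval_mul_exp {ι : Type*} [Fintype ι]
    {a p q W₁ W₂ k l : ℝ} {c : ℂ} {H : MvPolynomial ι ℝ} {f : EuclideanSpace ℝ ι → ℂ}
    (ha : 0 < a) (hp : 0 ≤ p) (hq : 0 ≤ q) (hW₁ : W₁ < p * a) (hW₂ : W₂ < q * (1 / (4 * a)))
    (hf : ∀ x, f x = ((MvPolynomial.eval (x : ι → ℝ) H * rexp (-a * ‖x‖ ^ 2) : ℝ) : ℂ)) :
    Integrable (fun x => ‖f x‖ ^ p * rexp (W₁ * ‖x‖ ^ 2) / (1 + ‖x‖) ^ k) ∧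
    ∀ fhat : EuclideanSpace ℝ ι → ℂ,
      (∀ y, fhat y = c * ∫ x, f x * cexp (-I * (inner ℝ x y : ℝ))) →
      Integrable (fun y => ‖fhat y‖ ^ q * rexp (W₂ * ‖y‖ ^ 2) / (1 + ‖y‖) ^ l) := by
  obtain rfl := funext hf
  have hdecay := (H.hasGaussianDecay_eval_mul_exp a).of_norm_le fun x => (norm_real _).le
  have hcont : Continuous fun x : EuclideanSpace ℝ ι =>
      ((MvPolynomial.eval (x : ι → ℝ) H * rexp (-a * ‖x‖ ^ 2) : ℝ) : ℂ) := by
    have := (MvPolynomial.continuous_eval H).comp (PiLp.continuous_ofLp 2 fun _ : ι => ℝ)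
    fun_prop
  refine ⟨hdecay.integrable_norm_rpow_mul_exp_div hcont hp hW₁ k, fun fhat hfhat => ?_⟩
  obtain rfl := funext hfhat
  have hint := hdecay.integrable hcont.aestronglyMeasurable (half_lt_self ha)
    (integrable_exp_neg_mul_sq_norm (half_pos ha))
  exact ((H.hasGaussianDecay_integral_ofReal_eval_mul_exp_mul_cexp ha).const_mul c)
    |>.integrable_norm_rpow_mul_exp_div
      (continuous_const.mul (continuous_integral_mul_cexp_neg_I_inner hint)) hq hW₂ l

theorem cowlingPrice_conditions_of_eq_eval_mul_heat {ι : Type*} [Fintype ι]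
    {p q s t t₀ k l c₀ : ℝ} {c : ℂ} {H : MvPolynomial ι ℝ} {f : EuclideanSpace ℝ ι → ℂ}
    (hp : 0 < p) (hq : 0 < q) (ht₀ : 0 < t₀) (htt₀ : t < t₀) (ht₀s : t₀ < s)
    (hf : ∀ x, f x =
      ((MvPolynomial.eval (x : ι → ℝ) H * (c₀ * rexp (-‖x‖ ^ 2 / (4 * t₀))) : ℝ) : ℂ)) :
    Integrable (fun x => ‖f x‖ ^ p * rexp (p / (4 * s) * ‖x‖ ^ 2) / (1 + ‖x‖) ^ k) ∧
    ∀ fhat : EuclideanSpace ℝ ι → ℂ,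
      (∀ y, fhat y = c * ∫ x, f x * cexp (-I * (inner ℝ x y : ℝ))) →
      Integrable (fun y => ‖fhat y‖ ^ q * rexp (q * t * ‖y‖ ^ 2) / (1 + ‖y‖) ^ l) := by
  refine cowlingPrice_conditions_of_eq_eval_mul_exp (a := 1 / (4 * t₀))
    (H := MvPolynomial.C c₀ * H) (by positivity) hp.le hq.le ?_ ?_ fun x => ?_
  · rw [div_eq_mul_one_div p]
    exact mul_lt_mul_of_pos_left (one_div_lt_one_div_of_lt (by positivity) (by linarith)) hp
  · rw [show 1 / (4 * (1 / (4 * t₀))) = t₀ by field_simp]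
    exact mul_lt_mul_of_pos_left htt₀ hq
  · rw [hf x, MvPolynomial.eval_mul, MvPolynomial.eval_C,
      show -‖x‖ ^ 2 / (4 * t₀) = -(1 / (4 * t₀)) * ‖x‖ ^ 2 by ring]
    congr 1
    ring

theorem stmt_6_general (n : ℕ) (hn : 2 ≤ n) (p q s t k l : ℝ)
    (hp : 1 ≤ p) (hq : 1 ≤ q) (ht : 0 < t) (hst : t < s) :
    (∀ t₀ : ℝ, t < t₀ → t₀ < s →
      ∀ (d : ℕ), 1 ≤ d → ∀ H : MvPolynomial (Fin n) ℝ, H ≠ 0 →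
      H.IsHomogeneous d → (∑ i, MvPolynomial.pderiv i (MvPolynomial.pderiv i H)) = 0 →
      ∀ f : EuclideanSpace ℝ (Fin n) → ℂ,
      (∀ x, f x = ((MvPolynomial.eval (x : Fin n → ℝ) H *
          ((4 * π * t₀) ^ (-(n : ℝ) / 2) * Real.exp (-‖x‖ ^ 2 / (4 * t₀))) : ℝ) : ℂ)) →
      ∀ fhat : EuclideanSpace ℝ (Fin n) → ℂ,
      (∀ y, fhat y = (((2 * π) ^ (-(n : ℝ) / 2) : ℝ) : ℂ) *
        ∫ x : EuclideanSpace ℝ (Fin n), f x *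
          Complex.exp (-Complex.I * (inner ℝ x y : ℝ))) →
      Integrable (fun x : EuclideanSpace ℝ (Fin n) =>
        ‖f x‖ ^ p * Real.exp (p / (4 * s) * ‖x‖ ^ 2) / (1 + ‖x‖) ^ k) ∧
      Integrable (fun y : EuclideanSpace ℝ (Fin n) =>
        ‖fhat y‖ ^ q * Real.exp (q * t * ‖y‖ ^ 2) / (1 + ‖y‖) ^ l)) ∧
    (∃ g : ℕ → (EuclideanSpace ℝ (Fin n) → ℂ), LinearIndependent ℂ g ∧
      ∀ j : ℕ, Integrable (fun x : EuclideanSpace ℝ (Fin n) =>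
          ‖g j x‖ ^ p * Real.exp (p / (4 * s) * ‖x‖ ^ 2) / (1 + ‖x‖) ^ k) ∧
        ∀ ghat : EuclideanSpace ℝ (Fin n) → ℂ,
          (∀ y, ghat y = (((2 * π) ^ (-(n : ℝ) / 2) : ℝ) : ℂ) *
            ∫ x : EuclideanSpace ℝ (Fin n), g j x *
              Complex.exp (-Complex.I * (inner ℝ x y : ℝ))) →
          Integrable (fun y : EuclideanSpace ℝ (Fin n) =>
            ‖ghat y‖ ^ q * Real.exp (q * t * ‖y‖ ^ 2) / (1 + ‖y‖) ^ l)) := by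
  have hp₀ : 0 < p := by linarith
  have hq₀ : 0 < q := by linarith
  refine ⟨fun t₀ htt₀ ht₀s _ _ H _ _ _ f hf fhat hfhat => ?_, ?_⟩
  · exact (cowlingPrice_conditions_of_eq_eval_mul_heat hp₀ hq₀ (ht.trans htt₀) htt₀ ht₀s
      hf).imp_right (· fhat hfhat)
  obtain ⟨t₀, htt₀, ht₀s⟩ := exists_between hst
  have i₀ : Fin n := ⟨0, by omega⟩
  refine ⟨_, linearIndependent_ofReal_apply_pow_mul_exp i₀ (1 / (4 * t₀)), fun j =>
    cowlingPrice_conditions_of_eq_eval_mul_heat (c₀ := 1) (H := MvPolynomial.X i₀ ^ j) hp₀ hq₀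
      (ht.trans htt₀) htt₀ ht₀s fun x => ?_⟩
  simp only [map_pow, MvPolynomial.eval_X, one_mul]
  congr 3
  ring

/-- **Sharpness when `s > t`** (Theorem 3.1(c)). For `s > t`, any `t₀ ∈ (t, s)` and
any solid harmonic `H` of degree `d ≥ 1` (the evaluation of a nonzero harmonic
homogeneous polynomial), the function `H · p_{t₀}` satisfies the Cowling–Price
conditions (i) and (ii); moreover there are infinitely many linearly independent
functions satisfying (i) and (ii). -/
theorem stmt_6 (n : ℕ) (hn : 2 ≤ n) (p q s t k l : ℝ)
    (hp : 1 ≤ p) (hq : 1 ≤ q) (ht : 0 < t) (hst : t < s)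
    (hk : k ∈ Ioc (n : ℝ) (n + p)) (hl : l ∈ Ioc (n : ℝ) (n + q)) :
    (∀ t₀ : ℝ, t < t₀ → t₀ < s →
      ∀ (d : ℕ), 1 ≤ d → ∀ H : MvPolynomial (Fin n) ℝ, H ≠ 0 →
      H.IsHomogeneous d → (∑ i, MvPolynomial.pderiv i (MvPolynomial.pderiv i H)) = 0 →
      ∀ f : EuclideanSpace ℝ (Fin n) → ℂ,
      (∀ x, f x = ((MvPolynomial.eval (x : Fin n → ℝ) H *
          ((4 * π * t₀) ^ (-(n : ℝ) / 2) * Real.exp (-‖x‖ ^ 2 / (4 * t₀))) : ℝ) : ℂ)) →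
      ∀ fhat : EuclideanSpace ℝ (Fin n) → ℂ,
      (∀ y, fhat y = (((2 * π) ^ (-(n : ℝ) / 2) : ℝ) : ℂ) *
        ∫ x : EuclideanSpace ℝ (Fin n), f x *
          Complex.exp (-Complex.I * (inner ℝ x y : ℝ))) →
      Integrable (fun x : EuclideanSpace ℝ (Fin n) =>
        ‖f x‖ ^ p * Real.exp (p / (4 * s) * ‖x‖ ^ 2) / (1 + ‖x‖) ^ k) ∧
      Integrable (fun y : EuclideanSpace ℝ (Fin n) =>
        ‖fhat y‖ ^ q * Real.exp (q * t * ‖y‖ ^ 2) / (1 + ‖y‖) ^ l)) ∧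
    (∃ g : ℕ → (EuclideanSpace ℝ (Fin n) → ℂ), LinearIndependent ℂ g ∧
      ∀ j : ℕ, Integrable (fun x : EuclideanSpace ℝ (Fin n) =>
          ‖g j x‖ ^ p * Real.exp (p / (4 * s) * ‖x‖ ^ 2) / (1 + ‖x‖) ^ k) ∧
        ∀ ghat : EuclideanSpace ℝ (Fin n) → ℂ,
          (∀ y, ghat y = (((2 * π) ^ (-(n : ℝ) / 2) : ℝ) : ℂ) *
            ∫ x : EuclideanSpace ℝ (Fin n), g j x *
              Complex.exp (-Complex.I * (inner ℝ x y : ℝ))) →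
          Integrable (fun y : EuclideanSpace ℝ (Fin n) =>
            ‖ghat y‖ ^ q * Real.exp (q * t * ‖y‖ ^ 2) / (1 + ‖y‖) ^ l)) :=
  stmt_6_general n hn p q s t k l hp hq ht hst
end
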